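/- arXiv:2601.19663 — 5 statements merged into one kernel-verified Lean document; each statement's English description precedes it below -/
import Mathlib

section
/- Let δ ∈ (1,2) and let P ⊂ B(0,10) ⊂ ℝ² be a compact set homeomorphic to the circle S¹, equipped with a Borel measure μ and constants C̃_μ ≥ 1, C̃_arc ≥ 1 such that: (i) (1/C̃_μ) r^δ ≤ μ(B(x₀,r) ∩ P) ≤ C̃_μ r^δ for all x₀ ∈ P and r ∈ [0,1]; (ii) for every pair of points z₁, z₂ ∈ P, letting γ₁, γ₂ be the two arcs of P joining z₁ and z₂, one has min_{j=1,2} diam(γ_j) ≤ C̃_arc |z₁ − z₂|. Set C_out = 2(4·5^δ C̃_μ²)^{1/(δ−1)}. Then the set X = P ∩ B(0,5) is ν-porous on lines from scales 0 to α₁, with ν = 1/(200 C_out C̃_arc²) and α₁ = 1/(10 C_out C̃_arc). That is, for every line segment I ⊂ ℝ² of length r ∈ (0, α₁), there exists a point x on I such that the ball B(x, νr) is disjoint from X. -/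
open MeasureTheory Metric Set Function
open scoped ENNReal Pointwise

noncomputable section

/-- `X ⊆ ℝ^d` is `ν`-porous on balls from scales `α₀` to `α₁`: for every ball of diameter `R`
with `α₀ < R < α₁` there is a point `x` in the ball with `B(x, νR)` disjoint from `X`. -/
def PorousOnBalls {d : ℕ} (ν α₀ α₁ : ℝ) (X : Set (EuclideanSpace ℝ (Fin d))) : Prop :=
  ∀ (c : EuclideanSpace ℝ (Fin d)) (R : ℝ), α₀ < R → R < α₁ →
    ∃ x ∈ Metric.closedBall c (R / 2), Disjoint (Metric.ball x (ν * R)) X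

/-- `X ⊆ ℝ^d` is `ν`-porous on lines from scales `α₀` to `α₁`: for every line segment of length
`R` with `α₀ < R < α₁` there is a point `x` on the segment with `B(x, νR)` disjoint from `X`. -/
def PorousOnLines {d : ℕ} (ν α₀ α₁ : ℝ) (X : Set (EuclideanSpace ℝ (Fin d))) : Prop :=
  ∀ a b : EuclideanSpace ℝ (Fin d), α₀ < dist a b → dist a b < α₁ →
    ∃ x ∈ segment ℝ a b, Disjoint (Metric.ball x (ν * dist a b)) X

/-- The cube `[-a, a]^d`. -/
def symCube (d : ℕ) (a : ℝ) : Set (EuclideanSpace ℝ (Fin d)) := {x | ∀ i, |x i| ≤ a}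

/-- The FUP exponent `β = exp(-exp((C ν⁻² |log ν|)^(C ν⁻¹ |log ν|)))`. -/
def fupBeta (C ν : ℝ) : ℝ :=
  Real.exp (-Real.exp ((C * ν⁻¹ ^ 2 * |Real.log ν|) ^ (C * ν⁻¹ * |Real.log ν|)))

open scoped RealInnerProductSpace

/-!
Suppose every point of a segment `[a, b]` of length `r` lies within `w = ν r` of `P`.
Regularity with exponent `δ > 1` makes `P` non-flat: for `p ∈ P`, `s ≤ 1` and any line through
`p`, some point of `P ∩ B̄(p, s)` is at distance `≥ s / C_out` from the line, since otherwise
`P ∩ B(p, s)` would be covered by about `C_out` balls of radius `2 s / C_out`, which carry too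
little mass. Applied near the three quarter points of the segment, this gives three points
`γ tᵢ` of the curve, each close to its own quarter point and high above the line `ab`.
They cut the curve into three arcs, and the segment lies in the union of the closed
`w`-neighbourhoods of these arcs. By the three-point condition, a point of the segment is never
near both an arc and its complementary arc, because both arcs of `P` between the two nearby
curve points reach a high point. By connectedness the segment then lies near a single arc or
near its complement. The first case is impossible: the third marked point would be close to
a point of that arc, and both arcs of `P` joining them pass near far-away quarter points.
Hence the segment lies near the complement of each of the three arcs, which is absurd.
-/

def ThreePointCondition {X : Type*} [PseudoMetricSpace X] (γ : ℝ → X) (C : ℝ) : Prop :=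
  ∀ t₁ t₂ : ℝ, t₁ ≤ t₂ → t₂ ≤ t₁ + 1 →
    min (diam (γ '' Icc t₁ t₂)) (diam (γ '' Icc t₂ (t₁ + 1))) ≤ C * dist (γ t₁) (γ t₂)

namespace ThreePointCondition

variable {X : Type*} [PseudoMetricSpace X] {γ : ℝ → X} {C : ℝ}

theorem min_dist_le (harc : ThreePointCondition γ C) (hγ : Continuous γ) (hper : Periodic γ 1)
    {s v e v' : ℝ} (hsv : s ≤ v) (hve : v ≤ e) (hev' : e ≤ v') (hv's : v' ≤ s + 1) :
    min (dist (γ v) (γ s)) (dist (γ v) (γ e)) ≤ C * dist (γ v) (γ v') := by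
  have hbdd : ∀ l r : ℝ, Bornology.IsBounded (γ '' Icc l r) :=
    fun l r ↦ (isCompact_Icc.image hγ).isBounded
  have h₁ : dist (γ v) (γ e) ≤ diam (γ '' Icc v v') :=
    dist_le_diam_of_mem (hbdd _ _) (mem_image_of_mem γ ⟨le_rfl, hve.trans hev'⟩)
      (mem_image_of_mem γ ⟨hve, hev'⟩)
  have h₂ : dist (γ v) (γ s) ≤ diam (γ '' Icc v' (v + 1)) := by
    rw [← hper v, ← hper s]
    exact dist_le_diam_of_mem (hbdd _ _) (mem_image_of_mem γ ⟨by linarith, le_rfl⟩)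
      (mem_image_of_mem γ ⟨hv's, by linarith⟩)
  calc min (dist (γ v) (γ s)) (dist (γ v) (γ e))
      ≤ min (diam (γ '' Icc v v')) (diam (γ '' Icc v' (v + 1))) := by
        rw [min_comm]; exact min_le_min h₁ h₂
    _ ≤ C * dist (γ v) (γ v') := harc v v' (hve.trans hev') (by linarith)

theorem disjoint_cthickening_arc (harc : ThreePointCondition γ C) (hC : 0 ≤ C)
    (hγ : Continuous γ) (hper : Periodic γ 1) {S : Set X} (hS : IsPreconnected S) {w : ℝ}
    (hw : 0 ≤ w) (hcov : S ⊆ cthickening w (range γ)) {s e t : ℝ} (hse : s ≤ e) (het : e ≤ t)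
    (hts : t ≤ s + 1)
    (hfar : ∀ x ∈ S, ∀ y, dist y x ≤ w → C * (2 * w) < min (dist y (γ s)) (dist y (γ e)))
    {m : X} (hm : m ∈ S)
    (hsep : ∀ y, dist y m ≤ w → C * dist y (γ t) < min (dist y (γ s)) (dist y (γ e))) :
    Disjoint S (cthickening w (γ '' Icc s e)) := by
  have near_arc : ∀ {l r : ℝ} {x : X}, x ∈ cthickening w (γ '' Icc l r) →
      ∃ v ∈ Icc l r, dist x (γ v) ≤ w := fun {l r x} hx ↦ by
    rw [(isCompact_Icc.image hγ).cthickening_eq_biUnion_closedBall hw] at hx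
    obtain ⟨_, ⟨v, hv, rfl⟩, hxv⟩ := mem_iUnion₂.mp hx
    exact ⟨v, hv, hxv⟩
  set A := cthickening w (γ '' Icc s e)
  set B := cthickening w (γ '' Icc e (s + 1))
  have hAB : S ⊆ A ∪ B := by
    rwa [← cthickening_union, ← image_union, Icc_union_Icc_eq_Icc hse (by linarith),
      hper.image_Icc one_pos]
  have hA_inter_B : ∀ x ∈ S, x ∈ A → x ∉ B := by
    intro x hx hxA hxB
    obtain ⟨v, hv, hxv⟩ := near_arc hxA
    obtain ⟨v', hv', hxv'⟩ := near_arc hxB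
    have hvv' : dist (γ v) (γ v') ≤ 2 * w := by
      linarith [dist_triangle_left (γ v) (γ v') x]
    have := harc.min_dist_le hγ hper hv.1 hv.2 hv'.1 hv'.2
    have := hfar x hx (γ v) (by rwa [dist_comm])
    nlinarith [mul_le_mul_of_nonneg_left hvv' hC]
  have hS_not_A : ¬ S ⊆ A := fun hSA ↦ by
    obtain ⟨v, hv, hmv⟩ := near_arc (hSA hm)
    have := harc.min_dist_le hγ hper hv.1 hv.2 het hts
    linarith [hsep (γ v) (by rwa [dist_comm])]
  have hSB : S ⊆ B := by
    refine ((isPreconnected_iff_subset_of_disjoint_closed.mp hS) A B isClosed_cthickening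
      isClosed_cthickening hAB ?_).resolve_left hS_not_A
    exact eq_empty_iff_forall_notMem.mpr fun x ⟨hx, hxA, hxB⟩ ↦ hA_inter_B x hx hxA hxB
  exact disjoint_left.mpr fun x hx hxA ↦ hA_inter_B x hx hxA (hSB hx)

theorem not_subset_cthickening_of_monotone (harc : ThreePointCondition γ C) (hC : 0 ≤ C)
    (hγ : Continuous γ) (hper : Periodic γ 1) {S : Set X} (hS : IsPreconnected S) {w : ℝ}
    (hw : 0 ≤ w) {t : Fin 3 → ℝ} (ht : Monotone t) (ht₂ : t 2 ≤ t 0 + 1) {m : Fin 3 → X}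
    (hm : ∀ i, m i ∈ S)
    (hfar : ∀ i, ∀ x ∈ S, ∀ y, dist y x ≤ w → C * (2 * w) < dist y (γ (t i)))
    (hsep : ∀ i j, i ≠ j → ∀ y, dist y (m i) ≤ w → C * dist y (γ (t i)) < dist y (γ (t j))) :
    ¬ S ⊆ cthickening w (range γ) := by
  intro hcov
  have h₀₁ : t 0 ≤ t 1 := ht (by decide)
  have h₁₂ : t 1 ≤ t 2 := ht (by decide)
  have disj : ∀ {s e t' : ℝ} {i j k : Fin 3}, γ s = γ (t i) → γ e = γ (t j) → γ t' = γ (t k) →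
      i ≠ k → j ≠ k → s ≤ e → e ≤ t' → t' ≤ s + 1 →
      Disjoint S (cthickening w (γ '' Icc s e)) := by
    intro s e t' i j k hs he ht' hik hjk hse het' hts
    refine harc.disjoint_cthickening_arc hC hγ hper hS hw hcov hse het' hts
      (fun x hx y hy ↦ ?_) (hm k) (fun y hy ↦ ?_)
    · rw [hs, he]; exact lt_min (hfar i x hx y hy) (hfar j x hx y hy)
    · rw [hs, he, ht']; exact lt_min (hsep k i hik.symm y hy) (hsep k j hjk.symm y hy)
  have d₀ := disj (i := 0) (j := 1) (k := 2) rfl rfl rfl (by decide) (by decide) h₀₁ h₁₂ ht₂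
  have d₁ := disj (i := 1) (j := 2) (k := 0) rfl rfl (hper _) (by decide) (by decide) h₁₂ ht₂
    (by linarith)
  have d₂ := disj (i := 2) (j := 0) (k := 1) rfl (hper _) (hper _) (by decide) (by decide)
    ht₂ (by linarith) (by linarith)
  have hrange :
      range γ = γ '' Icc (t 0) (t 1) ∪ γ '' Icc (t 1) (t 2) ∪ γ '' Icc (t 2) (t 0 + 1) := by
    rw [← image_union, ← image_union, Icc_union_Icc_eq_Icc h₀₁ h₁₂,
      Icc_union_Icc_eq_Icc (h₀₁.trans h₁₂) ht₂, hper.image_Icc one_pos]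
  have := hcov (hm 0)
  rw [hrange, cthickening_union, cthickening_union] at this
  rcases this with (h | h) | h
  · exact disjoint_left.mp d₀ (hm 0) h
  · exact disjoint_left.mp d₁ (hm 0) h
  · exact disjoint_left.mp d₂ (hm 0) h

theorem not_subset_cthickening (harc : ThreePointCondition γ C) (hC : 0 ≤ C)
    (hγ : Continuous γ) (hper : Periodic γ 1) {S : Set X} (hS : IsPreconnected S) {w : ℝ}
    (hw : 0 ≤ w) (t : Fin 3 → ℝ) {m : Fin 3 → X} (hm : ∀ i, m i ∈ S)
    (hfar : ∀ i, ∀ x ∈ S, ∀ y, dist y x ≤ w → C * (2 * w) < dist y (γ (t i)))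
    (hsep : ∀ i j, i ≠ j → ∀ y, dist y (m i) ≤ w → C * dist y (γ (t i)) < dist y (γ (t j))) :
    ¬ S ⊆ cthickening w (range γ) := by
  have hfract : ∀ x, γ (Int.fract x) = γ x := fun x ↦ by
    rw [Int.fract, ← mul_one (⌊x⌋ : ℝ), hper.sub_int_mul_eq]
  set σ := Tuple.sort (Int.fract ∘ t)
  refine harc.not_subset_cthickening_of_monotone hC hγ hper hS hw (t := (Int.fract ∘ t) ∘ σ)
    (Tuple.monotone_sort _) ?_ (m := m ∘ σ) (fun i ↦ hm (σ i)) (fun i ↦ ?_) (fun i j hij ↦ ?_)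
  · simp only [comp_apply]
    linarith [Int.fract_lt_one (t (σ 2)), Int.fract_nonneg (t (σ 0))]
  · simpa only [comp_apply, hfract] using hfar (σ i)
  · simpa only [comp_apply, hfract] using hsep (σ i) (σ j) (σ.injective.ne hij)

end ThreePointCondition

section Line

variable {E : Type*} [NormedAddCommGroup E] [InnerProductSpace ℝ E]

/-- The distance from `z` to the line `a + ℝ u`. -/
def distLine (a u z : E) : ℝ := ‖(ℝ ∙ u)ᗮ.starProjection (z - a)‖

theorem distLine_le_distLine_add_dist (a u y z : E) :
    distLine a u y ≤ distLine a u z + dist y z := by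
  have h := norm_add_le ((ℝ ∙ u)ᗮ.starProjection (z - a)) ((ℝ ∙ u)ᗮ.starProjection (y - z))
  rw [← map_add, sub_add_sub_cancel'] at h
  unfold distLine
  linarith [Submodule.norm_starProjection_apply_le (ℝ ∙ u)ᗮ (y - z), dist_eq_norm y z]

theorem distLine_le_distLine_add_distLine (a p u q : E) :
    distLine p u q ≤ distLine a u q + distLine a u p := by
  have h := norm_sub_le ((ℝ ∙ u)ᗮ.starProjection (q - a)) ((ℝ ∙ u)ᗮ.starProjection (p - a))
  rwa [← map_sub, sub_sub_sub_cancel_right] at h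

theorem distLine_add_smul (a u : E) (c : ℝ) : distLine a u (a + c • u) = 0 := by
  rw [distLine, add_sub_cancel_left, map_smul,
    Submodule.starProjection_orthogonalComplement_singleton_eq_zero, smul_zero, norm_zero]

theorem norm_sub_add_smul_sq {u : E} (hu : ‖u‖ = 1) (a z : E) (c : ℝ) :
    ‖z - (a + c • u)‖ ^ 2 = (⟪u, z - a⟫ - c) ^ 2 + distLine a u z ^ 2 := by
  set w := (ℝ ∙ u)ᗮ.starProjection (z - a)
  have hdecomp : z - (a + c • u) = (⟪u, z - a⟫ - c) • u + w := by
    rw [sub_smul, ← Submodule.starProjection_unit_singleton ℝ hu (z - a)]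
    conv_lhs => rw [← sub_sub,
      ← Submodule.starProjection_add_starProjection_orthogonal (K := ℝ ∙ u) (z - a)]
    abel
  have horth : ⟪(⟪u, z - a⟫ - c) • u, w⟫ = 0 := by
    rw [real_inner_smul_left, Submodule.mem_orthogonal_singleton_iff_inner_right.mp
      (Submodule.starProjection_apply_mem _ _), mul_zero]
  rw [hdecomp, sq, norm_add_sq_eq_norm_sq_add_norm_sq_real horth, norm_smul, hu, mul_one,
    Real.norm_eq_abs, ← sq, sq_abs, ← sq]
  rfl

theorem exists_mem_Icc_dist_add_smul_lt {u : E} (hu : ‖u‖ = 1) {t : ℝ} (ht : 0 < t) {K : ℤ}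
    {a z : E} (hzK : dist z a ≤ 2 * t * K) (hz : distLine a u z < t) :
    ∃ k ∈ Finset.Icc (-K) K, dist z (a + (2 * t * k) • u) < 2 * t := by
  set α := ⟪u, z - a⟫
  set k := round (α / (2 * t))
  have hround : |α - 2 * t * k| ≤ t := by
    have := abs_sub_round (α / (2 * t))
    rw [show α - 2 * t * k = 2 * t * (α / (2 * t) - k) by field_simp, abs_mul,
      abs_of_pos (by positivity)]
    nlinarith
  have hα : |α| ≤ 2 * t * K := by
    have := abs_real_inner_le_norm u (z - a)
    rw [hu, one_mul, ← dist_eq_norm] at this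
    linarith
  have hk : |k| ≤ K := by
    have : |(k : ℝ)| < K + 1 := by
      rw [abs_le] at hround hα
      rw [abs_lt]; constructor <;> nlinarith
    exact_mod_cast Int.lt_add_one_iff.mp (by exact_mod_cast this)
  refine ⟨k, Finset.mem_Icc.mpr (abs_le.mp hk), ?_⟩
  have hsq := norm_sub_add_smul_sq hu a z (2 * t * k)
  rw [← sq_abs (α - _)] at hsq
  rw [dist_eq_norm]
  refine lt_of_pow_lt_pow_left₀ 2 (by positivity) ?_
  rw [hsq]
  have h₀ : 0 ≤ distLine a u z := norm_nonneg _
  nlinarith [mul_le_mul hround hround (abs_nonneg _) ht.le, mul_lt_mul'' hz hz h₀ h₀]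

end Line

section Regular

variable {X : Type*} [PseudoMetricSpace X] [MeasurableSpace X]

def IsAhlforsRegularOn (μ : Measure X) (P : Set X) (δ C : ℝ) : Prop :=
  ∀ x₀ ∈ P, ∀ r ∈ Icc (0 : ℝ) 1,
    ENNReal.ofReal (C⁻¹ * r ^ δ) ≤ μ (ball x₀ r ∩ P) ∧
      μ (ball x₀ r ∩ P) ≤ ENNReal.ofReal (C * r ^ δ)

theorem measure_inter_le_card_mul_of_subset_biUnion_ball {μ : Measure X} {P A : Set X} {ρ : ℝ}
    {M : ℝ≥0∞} (hP : ∀ x ∈ P, μ (ball x (2 * ρ) ∩ P) ≤ M) {ι : Type*} (F : Finset ι)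
    (c : ι → X) (hA : A ∩ P ⊆ ⋃ k ∈ F, ball (c k) ρ) :
    μ (A ∩ P) ≤ F.card * M := by
  have hball : ∀ k, μ (ball (c k) ρ ∩ P) ≤ M := by
    intro k
    rcases (ball (c k) ρ ∩ P).eq_empty_or_nonempty with h | ⟨x, hxk, hxP⟩
    · simp [h]
    · refine (measure_mono (inter_subset_inter_left P (ball_subset_ball' ?_))).trans (hP x hxP)
      rw [mem_ball'] at hxk
      linarith
  calc μ (A ∩ P) ≤ μ (⋃ k ∈ F, ball (c k) ρ ∩ P) :=
        measure_mono fun z hz ↦ by simpa [← iUnion₂_inter] using And.intro (hA hz) hz.2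
    _ ≤ ∑ k ∈ F, μ (ball (c k) ρ ∩ P) := measure_biUnion_finset_le _ _
    _ ≤ ∑ _k ∈ F, M := Finset.sum_le_sum fun k _ ↦ hball k
    _ = F.card * M := by rw [Finset.sum_const, nsmul_eq_mul]

end Regular

def outerConst (δ Cμ : ℝ) : ℝ := 2 * (4 * 5 ^ δ * Cμ ^ 2) ^ (1 / (δ - 1))

theorem forty_le_outerConst {δ Cμ : ℝ} (hδ : δ ∈ Ioo 1 2) (hCμ : 1 ≤ Cμ) :
    40 ≤ outerConst δ Cμ := by
  obtain ⟨hδ₁, hδ₂⟩ := hδ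
  have h5 : (5 : ℝ) ≤ 5 ^ δ := by
    simpa using Real.rpow_le_rpow_of_exponent_le (by norm_num : (1 : ℝ) ≤ 5) hδ₁.le
  have hbase : 20 ≤ 4 * (5 : ℝ) ^ δ * Cμ ^ 2 := by nlinarith
  have hexp : 1 ≤ 1 / (δ - 1) := by rw [le_div_iff₀ (by linarith)]; linarith
  have := Real.rpow_le_rpow_of_exponent_le (by linarith) hexp (x := 4 * (5 : ℝ) ^ δ * Cμ ^ 2)
  rw [Real.rpow_one] at this
  unfold outerConst
  linarith

theorem outerConst_add_three_mul_lt {δ Cμ : ℝ} (hδ : δ ∈ Ioo 1 2) (hCμ : 1 ≤ Cμ) {s : ℝ}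
    (hs : 0 < s) :
    (outerConst δ Cμ + 3) * (Cμ * (4 * (s / outerConst δ Cμ)) ^ δ) < Cμ⁻¹ * s ^ δ := by
  have hCo := forty_le_outerConst hδ hCμ
  obtain ⟨hδ₁, -⟩ := hδ
  set A := 4 * (5 : ℝ) ^ δ * Cμ ^ 2
  set Co := outerConst δ Cμ with hCo_def
  have hA : 0 < A := by positivity
  -- `Co ^ (δ - 1) = 2 ^ (δ - 1) * A` is how the constant was chosen.
  have hCo_rpow : A ≤ Co ^ (δ - 1) := by
    rw [hCo_def, outerConst, Real.mul_rpow (by norm_num) (by positivity), ← Real.rpow_mul hA.le,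
      one_div_mul_cancel (by linarith), Real.rpow_one]
    exact le_mul_of_one_le_left hA.le (Real.one_le_rpow (by norm_num) (by linarith))
  have h45 : (4 : ℝ) ^ δ < 5 ^ δ := Real.rpow_lt_rpow (by norm_num) (by norm_num) (by linarith)
  have hkey : (Co + 3) * Cμ ^ 2 * 4 ^ δ < Co ^ δ :=
    calc (Co + 3) * Cμ ^ 2 * 4 ^ δ
        < Co * A := by
          simp only [A]; nlinarith [Real.rpow_pos_of_pos (by norm_num : (0 : ℝ) < 4) δ,
            mul_pos (by positivity : (0 : ℝ) < Cμ ^ 2) (by linarith : (0 : ℝ) < Co)]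
      _ ≤ Co * Co ^ (δ - 1) := by gcongr
      _ = Co ^ δ := by rw [← Real.rpow_one_add' (by linarith) (by linarith), add_sub_cancel]
  have hCoδ : 0 < Co ^ δ := Real.rpow_pos_of_pos (by linarith) δ
  have hsplit : (Co + 3) * (Cμ * (4 * (s / Co)) ^ δ) =
      (Co + 3) * Cμ ^ 2 * 4 ^ δ / Co ^ δ * (Cμ⁻¹ * s ^ δ) := by
    rw [Real.mul_rpow (by norm_num) (by positivity), Real.div_rpow hs.le (by linarith)]
    field_simp
  rw [hsplit]
  exact mul_lt_of_lt_one_left (by positivity) ((div_lt_one hCoδ).mpr hkey)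

theorem IsAhlforsRegularOn.exists_distLine_ge {E : Type*} [NormedAddCommGroup E]
    [InnerProductSpace ℝ E] [MeasurableSpace E] {μ : Measure E} {P : Set E} {δ Cμ : ℝ}
    (hreg : IsAhlforsRegularOn μ P δ Cμ) (hδ : δ ∈ Ioo 1 2) (hCμ : 1 ≤ Cμ) {u : E}
    (hu : ‖u‖ = 1) {p : E} (hp : p ∈ P) {s : ℝ} (hs₀ : 0 < s) (hs₁ : s ≤ 1) :
    ∃ q ∈ P, dist q p ≤ s ∧ s / outerConst δ Cμ ≤ distLine p u q := by
  by_contra! hflat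
  have hCo := forty_le_outerConst hδ hCμ
  set Co := outerConst δ Cμ
  set t := s / Co
  have ht : 0 < t := by positivity
  have hst : s = t * Co := (div_mul_cancel₀ s (by linarith)).symm
  set K := ⌈Co / 2⌉
  have hK : Co / 2 ≤ K := Int.le_ceil _
  have hcover : ball p s ∩ P ⊆ ⋃ k ∈ Finset.Icc (-K) K, ball (p + (2 * t * k) • u) (2 * t) := by
    rintro z ⟨hz, hzP⟩
    rw [mem_ball] at hz
    obtain ⟨k, hk, hlt⟩ := exists_mem_Icc_dist_add_smul_lt hu ht
      (by nlinarith : dist z p ≤ 2 * t * K) (hflat z hzP hz.le)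
    exact mem_biUnion hk hlt
  have hupper : ∀ x ∈ P, μ (ball x (2 * (2 * t)) ∩ P) ≤ ENNReal.ofReal (Cμ * (4 * t) ^ δ) :=
    fun x hx ↦ by
      rw [show 2 * (2 * t) = 4 * t by ring]
      refine (hreg x hx (4 * t) ⟨by positivity, ?_⟩).2
      have : t ≤ s / 40 := div_le_div_of_nonneg_left hs₀.le (by norm_num) hCo
      linarith
  have hcard : ((Finset.Icc (-K) K).card : ℝ) ≤ Co + 3 := by
    have hK₀ : 0 ≤ K := Int.ceil_nonneg (by linarith)
    have hcardK : ((Finset.Icc (-K) K).card : ℤ) = 2 * K + 1 := by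
      rw [Int.card_Icc_of_le _ _ (by omega)]; ring
    have : ((Finset.Icc (-K) K).card : ℝ) = 2 * K + 1 := by exact_mod_cast hcardK
    linarith [Int.ceil_lt_add_one (Co / 2)]
  have hmeasure :
      ENNReal.ofReal (Cμ⁻¹ * s ^ δ) ≤ ENNReal.ofReal ((Co + 3) * (Cμ * (4 * t) ^ δ)) :=
    calc ENNReal.ofReal (Cμ⁻¹ * s ^ δ) ≤ μ (ball p s ∩ P) := (hreg p hp s ⟨hs₀.le, hs₁⟩).1
      _ ≤ (Finset.Icc (-K) K).card * ENNReal.ofReal (Cμ * (4 * t) ^ δ) :=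
        measure_inter_le_card_mul_of_subset_biUnion_ball hupper _ _ hcover
      _ ≤ ENNReal.ofReal (Co + 3) * ENNReal.ofReal (Cμ * (4 * t) ^ δ) := by
        gcongr
        rw [← ENNReal.ofReal_natCast]
        exact ENNReal.ofReal_le_ofReal hcard
      _ = ENNReal.ofReal ((Co + 3) * (Cμ * (4 * t) ^ δ)) := by
        rw [← ENNReal.ofReal_mul (by linarith)]
  have := (ENNReal.ofReal_le_ofReal_iff (by positivity)).mp hmeasure
  linarith [outerConst_add_three_mul_lt hδ hCμ hs₀]

theorem IsAhlforsRegularOn.exists_near_distLine_ge {E : Type*} [NormedAddCommGroup E]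
    [InnerProductSpace ℝ E] [MeasurableSpace E] {μ : Measure E} {P : Set E} {δ Cμ : ℝ}
    (hreg : IsAhlforsRegularOn μ P δ Cμ) (hδ : δ ∈ Ioo 1 2) (hCμ : 1 ≤ Cμ) {u : E}
    (hu : ‖u‖ = 1) (a : E) {x p : E} (hp : p ∈ P) {w : ℝ} (hpx : dist p x ≤ w) {s : ℝ}
    (hs₀ : 0 < s) (hs₁ : s ≤ 1) :
    ∃ q ∈ P, dist q x ≤ s + w ∧ s / outerConst δ Cμ ≤ distLine a u q + distLine a u x + w := by
  obtain ⟨q, hqP, hqp, hq⟩ := hreg.exists_distLine_ge hδ hCμ hu hp hs₀ hs₁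
  refine ⟨q, hqP, by linarith [dist_triangle q p x], ?_⟩
  linarith [distLine_le_distLine_add_distLine a p u q, distLine_le_distLine_add_dist a u p x]

theorem exists_separated_triple_mem_segment {E : Type*} [NormedAddCommGroup E]
    [NormedSpace ℝ E] (a b : E) :
    ∃ m : Fin 3 → E, (∀ i, m i ∈ segment ℝ a b) ∧
      ∀ i j, i ≠ j → dist a b / 4 ≤ dist (m i) (m j) := by
  refine ⟨fun i ↦ AffineMap.lineMap a b (((i : ℕ) + 1) / 4 : ℝ),
    fun i ↦ lineMap_mem_segment ℝ a b ⟨by positivity, by fin_cases i <;> norm_num⟩,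
    fun i j hij ↦ ?_⟩
  have : 1 / 4 ≤ |(((i : ℕ) + 1) / 4 : ℝ) - ((j : ℕ) + 1) / 4| := by
    fin_cases i <;> fin_cases j <;> first | exact absurd rfl hij | norm_num
  rw [dist_lineMap_lineMap, Real.dist_eq]
  nlinarith [dist_nonneg (x := a) (y := b)]

theorem distLine_eq_zero_of_mem_segment {E : Type*} [NormedAddCommGroup E]
    [InnerProductSpace ℝ E] {a b x : E} (hab : a ≠ b) (hx : x ∈ segment ℝ a b) :
    distLine a (‖b - a‖⁻¹ • (b - a)) x = 0 := by
  rw [segment_eq_image'] at hx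
  obtain ⟨θ, -, rfl⟩ := hx
  convert distLine_add_smul a (‖b - a‖⁻¹ • (b - a)) (θ * ‖b - a‖) using 3
  rw [mul_smul, smul_inv_smul₀ (norm_ne_zero_iff.mpr (sub_ne_zero.mpr hab.symm))]

theorem ThreePointCondition.exists_mem_segment_forall_le_dist {E : Type*} [NormedAddCommGroup E]
    [InnerProductSpace ℝ E] [MeasurableSpace E] {δ Cμ C : ℝ} (hδ : δ ∈ Ioo 1 2) (hCμ : 1 ≤ Cμ)
    (hC : 0 ≤ C) {γ : ℝ → E} (harc : ThreePointCondition γ C) (hγ : Continuous γ)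
    (hper : Periodic γ 1) {μ : Measure E} (hreg : IsAhlforsRegularOn μ (range γ) δ Cμ)
    (a b : E) {w s : ℝ} (hw : 0 ≤ w) (hs₀ : 0 < s) (hs₁ : s ≤ 1)
    (hfar : C * (2 * w) < s / outerConst δ Cμ - 2 * w)
    (hsep : C * (2 * w + s) < dist a b / 4 - 2 * w - s) :
    ∃ x ∈ segment ℝ a b, ∀ T, w ≤ dist (γ T) x := by
  by_contra! hnear
  have hab : a ≠ b := dist_pos.mp (by nlinarith)
  set u := ‖b - a‖⁻¹ • (b - a)
  have hu : ‖u‖ = 1 := norm_smul_inv_norm (sub_ne_zero.mpr hab.symm)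
  have hseg : ∀ x ∈ segment ℝ a b, distLine a u x = 0 :=
    fun x ↦ distLine_eq_zero_of_mem_segment hab
  obtain ⟨m, hm, hm_sep⟩ := exists_separated_triple_mem_segment a b
  have hhigh : ∀ i, ∃ T, dist (γ T) (m i) ≤ s + w ∧
      s / outerConst δ Cμ ≤ distLine a u (γ T) + w := by
    intro i
    obtain ⟨T, hT⟩ := hnear (m i) (hm i)
    obtain ⟨_, ⟨T', rfl⟩, hT'm, hT'⟩ :=
      hreg.exists_near_distLine_ge hδ hCμ hu a (mem_range_self T) hT.le hs₀ hs₁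
    rw [hseg (m i) (hm i), add_zero] at hT'
    exact ⟨T', hT'm, hT'⟩
  choose t ht using hhigh
  refine harc.not_subset_cthickening hC hγ hper (convex_segment a b).isPreconnected hw t hm
    (fun i x hx y hy ↦ ?_) (fun i j hij y hy ↦ ?_) fun x hx ↦ ?_
  · linarith [distLine_le_distLine_add_dist a u y x, hseg x hx, (ht i).2,
      distLine_le_distLine_add_dist a u (γ (t i)) y, dist_comm y (γ (t i))]
  · calc C * dist y (γ (t i)) ≤ C * (2 * w + s) := by
          gcongr
          linarith [dist_triangle y (m i) (γ (t i)), dist_comm (m i) (γ (t i)), (ht i).1]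
      _ < dist a b / 4 - 2 * w - s := hsep
      _ ≤ dist y (γ (t j)) := by
          linarith [hm_sep i j hij, dist_triangle4 (m i) y (γ (t j)) (m j), dist_comm (m i) y,
            (ht j).1]
  · obtain ⟨T, hT⟩ := hnear x hx
    exact mem_cthickening_of_dist_le x (γ T) w _ (mem_range_self T)
      (by rw [dist_comm]; exact hT.le)

theorem PorousOnLines.mono {d : ℕ} {ν α₀ α₁ : ℝ} {X Y : Set (EuclideanSpace ℝ (Fin d))}
    (h : PorousOnLines ν α₀ α₁ Y) (hXY : X ⊆ Y) : PorousOnLines ν α₀ α₁ X :=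
  fun a b h₀ h₁ ↦ (h a b h₀ h₁).imp fun _ ⟨hx, hd⟩ ↦ ⟨hx, hd.mono_right hXY⟩

theorem porousOnLines_range_of_isAhlforsRegularOn {d : ℕ} {δ Cμ Carc : ℝ} (hδ : δ ∈ Ioo 1 2)
    (hCμ : 1 ≤ Cμ) (hCarc : 1 ≤ Carc) {γ : ℝ → EuclideanSpace ℝ (Fin d)} (hγ : Continuous γ)
    (hper : Periodic γ 1) (harc : ThreePointCondition γ Carc)
    {μ : Measure (EuclideanSpace ℝ (Fin d))} (hreg : IsAhlforsRegularOn μ (range γ) δ Cμ) :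
    PorousOnLines (200 * outerConst δ Cμ * Carc ^ 2)⁻¹ 0 (10 * outerConst δ Cμ * Carc)⁻¹
      (range γ) := by
  intro a b hr hrα
  have hCo := forty_le_outerConst hδ hCμ
  set Co := outerConst δ Cμ
  set w := (200 * Co * Carc ^ 2)⁻¹ * dist a b
  have hw : 0 < w := by positivity
  have hrw : dist a b = 200 * Co * Carc ^ 2 * w := by simp only [w]; field_simp
  have hC2 : Carc ≤ Carc ^ 2 := le_self_pow₀ hCarc two_ne_zero
  have hCw : w ≤ Carc * w := le_mul_of_one_le_left hw.le hCarc
  set s := 10 * Co * Carc * w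
  have hs₁ : s ≤ 1 := by
    have : (10 * Co * Carc)⁻¹ ≤ 1 := inv_le_one_of_one_le₀ (by nlinarith)
    nlinarith
  have hfar : Carc * (2 * w) < s / Co - 2 * w := by
    rw [show s / Co = 10 * (Carc * w) by simp only [s]; field_simp]
    linarith
  have hsep : Carc * (2 * w + s) < dist a b / 4 - 2 * w - s := by
    have h₁ : Co * Carc * w ≤ Co * Carc ^ 2 * w := by gcongr
    have h₂ : 40 * (Carc * w) ≤ Co * Carc ^ 2 * w := by rw [mul_assoc Co]; gcongr
    nlinarith
  obtain ⟨x, hx, hx_far⟩ := harc.exists_mem_segment_forall_le_dist hδ hCμ (by linarith) hγ hper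
    hreg a b hw.le (by positivity) hs₁ hfar hsep
  exact ⟨x, hx, disjoint_left.mpr fun y hy ⟨T, hT⟩ ↦
    (hx_far T).not_gt (by rw [hT]; exact mem_ball.mp hy)⟩

theorem limit_set_line_porous_general (δ : ℝ) (hδ : δ ∈ Set.Ioo (1 : ℝ) 2)
    (γ : ℝ → EuclideanSpace ℝ (Fin 2)) (hγcont : Continuous γ)
    (hγper : ∀ t, γ (t + 1) = γ t)
    (P : Set (EuclideanSpace ℝ (Fin 2))) (hPγ : P = Set.range γ)
    (μ : Measure (EuclideanSpace ℝ (Fin 2))) (Cμ Carc : ℝ)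
    (hCμ : 1 ≤ Cμ) (hCarc : 1 ≤ Carc)
    (hreg : ∀ x₀ ∈ P, ∀ r : ℝ, r ∈ Set.Icc (0 : ℝ) 1 →
      ENNReal.ofReal (Cμ⁻¹ * r ^ δ) ≤ μ (Metric.ball x₀ r ∩ P) ∧
      μ (Metric.ball x₀ r ∩ P) ≤ ENNReal.ofReal (Cμ * r ^ δ))
    (harc : ∀ t₁ t₂ : ℝ, t₁ ≤ t₂ → t₂ ≤ t₁ + 1 →
      min (Metric.diam (γ '' Set.Icc t₁ t₂)) (Metric.diam (γ '' Set.Icc t₂ (t₁ + 1))) ≤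
        Carc * dist (γ t₁) (γ t₂)) :
    ∀ a b : EuclideanSpace ℝ (Fin 2),
      0 < dist a b →
      dist a b < (10 * (2 * (4 * (5 : ℝ) ^ δ * Cμ ^ 2) ^ (1 / (δ - 1))) * Carc)⁻¹ →
      ∃ x ∈ segment ℝ a b,
        Disjoint
          (Metric.ball x
            ((200 * (2 * (4 * (5 : ℝ) ^ δ * Cμ ^ 2) ^ (1 / (δ - 1))) * Carc ^ 2)⁻¹ *
              dist a b))
          (P ∩ Metric.ball 0 5) := by
  subst hPγ
  exact (porousOnLines_range_of_isAhlforsRegularOn hδ hCμ hCarc hγcont hγper harc hreg).mono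
    inter_subset_left

/-- **Line porosity of the limit set** (Proposition 3.5). A `δ`-regular Jordan curve
`P ⊆ B(0,10) ⊆ ℝ²` (parametrized by a continuous injective 1-periodic loop `γ`) satisfying
the three-point condition with constant `C̃_arc` is such that `X = P ∩ B(0,5)` is `ν`-porous
on lines from scales `0` to `α₁`, where `C_out = 2(4·5^δ C̃_μ²)^(1/(δ-1))`,
`ν = 1/(200 C_out C̃_arc²)` and `α₁ = 1/(10 C_out C̃_arc)`. -/
theorem limit_set_line_porous (δ : ℝ) (hδ : δ ∈ Set.Ioo (1 : ℝ) 2)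
    (γ : ℝ → EuclideanSpace ℝ (Fin 2)) (hγcont : Continuous γ)
    (hγper : ∀ t, γ (t + 1) = γ t) (hγinj : Set.InjOn γ (Set.Ico (0 : ℝ) 1))
    (P : Set (EuclideanSpace ℝ (Fin 2))) (hPγ : P = Set.range γ)
    (hPsub : P ⊆ Metric.ball 0 10)
    (μ : Measure (EuclideanSpace ℝ (Fin 2))) (Cμ Carc : ℝ)
    (hCμ : 1 ≤ Cμ) (hCarc : 1 ≤ Carc)
    (hreg : ∀ x₀ ∈ P, ∀ r : ℝ, r ∈ Set.Icc (0 : ℝ) 1 →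
      ENNReal.ofReal (Cμ⁻¹ * r ^ δ) ≤ μ (Metric.ball x₀ r ∩ P) ∧
      μ (Metric.ball x₀ r ∩ P) ≤ ENNReal.ofReal (Cμ * r ^ δ))
    (harc : ∀ t₁ t₂ : ℝ, t₁ ≤ t₂ → t₂ ≤ t₁ + 1 →
      min (Metric.diam (γ '' Set.Icc t₁ t₂)) (Metric.diam (γ '' Set.Icc t₂ (t₁ + 1))) ≤
        Carc * dist (γ t₁) (γ t₂)) :
    ∀ a b : EuclideanSpace ℝ (Fin 2),
      0 < dist a b →
      dist a b < (10 * (2 * (4 * (5 : ℝ) ^ δ * Cμ ^ 2) ^ (1 / (δ - 1))) * Carc)⁻¹ →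
      ∃ x ∈ segment ℝ a b,
        Disjoint
          (Metric.ball x
            ((200 * (2 * (4 * (5 : ℝ) ^ δ * Cμ ^ 2) ^ (1 / (δ - 1))) * Carc ^ 2)⁻¹ *
              dist a b))
          (P ∩ Metric.ball 0 5) :=
  limit_set_line_porous_general δ hδ γ hγcont hγper P hPγ μ Cμ Carc hCμ hCarc hreg harc
end
end

section
/- Let δ ∈ (1,2), let P ⊂ ℝ² be a set equipped with a Borel measure μ and a constant C̃_μ ≥ 1 such that (1/C̃_μ) r^δ ≤ μ(B(x₀,r) ∩ P) ≤ C̃_μ r^δ for all x₀ ∈ P and r ∈ [0,1]. Set C_out = 2(4·5^δ C̃_μ²)^{1/(δ−1)}. Then for every point x ∈ P, every line L ⊂ ℝ², and every r ∈ (0, 1/2), there exists a point y ∈ B(x,r) ∩ P such that dist(y, L) ≥ r/C_out. -/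
open MeasureTheory Metric Set Function
open scoped ENNReal Pointwise

noncomputable section

/-! If every point of `B(x, r) ∩ P` lay within `ε = r / C_out` of the line `L`, then `B(x, r) ∩ P`
would be covered by `r / ε + 3` balls of radius `2ε` centred on `L`, each of measure at most
`C̃_μ (5ε)^δ` by upper regularity. The lower regularity bound `C̃_μ⁻¹ r^δ` then forces
`C_out^(δ-1) ≲ 5^δ C̃_μ²`, which the choice of `C_out` rules out because `δ > 1`. -/

theorem Real.exists_finset_card_le_closedBall_subset_biUnion (a : ℝ) {ℓ ε : ℝ} (hℓ : 0 ≤ ℓ)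
    (hε : 0 < ε) :
    ∃ s : Finset ℝ, (s.card : ℝ) ≤ ℓ / ε + 2 ∧ closedBall a ℓ ⊆ ⋃ c ∈ s, closedBall c ε := by
  set n := ⌈ℓ / ε⌉₊
  set f : ℕ → ℝ := fun k => a - ℓ + ε * (2 * k + 1)
  refine ⟨(Finset.range (n + 1)).image f, ?_, ?_⟩
  · have hcard : (((Finset.range (n + 1)).image f).card : ℝ) ≤ n + 1 := by
      exact_mod_cast Finset.card_image_le.trans_eq (Finset.card_range _)
    linarith [Nat.ceil_lt_add_one (div_nonneg hℓ hε.le)]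
  · intro t ht
    rw [mem_closedBall, Real.dist_eq, abs_le] at ht
    -- `k` indexes the interval `[a - ℓ + 2εk, a - ℓ + 2ε(k+1))` containing `t`
    set k := ⌊(t - a + ℓ) / (2 * ε)⌋₊
    have hk := Nat.floor_le (a := (t - a + ℓ) / (2 * ε)) (div_nonneg (by linarith) (by positivity))
    have hk' := Nat.lt_floor_add_one ((t - a + ℓ) / (2 * ε))
    rw [le_div_iff₀ (by positivity)] at hk
    rw [div_lt_iff₀ (by positivity)] at hk'
    have hkn : k ≤ n := by
      have : (k : ℝ) ≤ ℓ / ε := by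
        rw [le_div_iff₀ hε]; nlinarith
      exact_mod_cast this.trans (Nat.le_ceil _)
    refine mem_biUnion (Finset.mem_image_of_mem _ (Finset.mem_range.2 (Nat.lt_succ_of_le hkn))) ?_
    rw [mem_closedBall, Real.dist_eq, abs_le]
    constructor <;> nlinarith

section Line

variable {E : Type*} [NormedAddCommGroup E] [InnerProductSpace ℝ E]

theorem exists_finset_card_le_ball_inter_thickening_line_subset {p v : E} (hv : v ≠ 0) (x : E)
    {r ε : ℝ} (hr : 0 ≤ r) (hε : 0 < ε) :
    ∃ s : Finset E, (s.card : ℝ) ≤ r / ε + 3 ∧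
      ball x r ∩ thickening ε {z | ∃ t : ℝ, z = p + t • v} ⊆ ⋃ c ∈ s, closedBall c (2 * ε) := by
  classical
  set u := ‖v‖⁻¹ • v
  have hu : ‖u‖ = 1 := norm_smul_inv_norm hv
  -- in the coordinate along `u`, cover the window of half-width `r + ε` around that of `x`
  obtain ⟨S, hS, hcover⟩ := Real.exists_finset_card_le_closedBall_subset_biUnion
    (inner ℝ (x - p) u) (add_nonneg hr hε.le) hε
  refine ⟨S.image fun c => p + c • u, ?_, ?_⟩
  · calc ((S.image fun c => p + c • u).card : ℝ) ≤ S.card :=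
        mod_cast Finset.card_image_le
      _ ≤ (r + ε) / ε + 2 := hS
      _ = r / ε + 3 := by field_simp; ring
  rintro y ⟨hyx, hy⟩
  obtain ⟨_, ⟨t, rfl⟩, hyz⟩ := mem_thickening_iff.1 hy
  have hline : p + t • v = p + (t * ‖v‖) • u := by
    rw [smul_smul, mul_assoc, mul_inv_cancel₀ (norm_ne_zero_iff.2 hv), mul_one]
  rw [hline] at hyz
  set s := t * ‖v‖
  have hs : s ∈ closedBall (inner ℝ (x - p) u) (r + ε) := by
    have hinner : inner ℝ (p + s • u - x) u = s - inner ℝ (x - p) u := by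
      rw [show p + s • u - x = s • u - (x - p) by abel, inner_sub_left, real_inner_smul_left,
        real_inner_self_eq_norm_sq, hu]
      ring
    rw [mem_closedBall, Real.dist_eq, ← hinner]
    calc |inner ℝ (p + s • u - x) u| ≤ ‖p + s • u - x‖ := by
          simpa [hu] using abs_real_inner_le_norm (p + s • u - x) u
      _ ≤ dist (p + s • u) y + dist y x := by rw [← dist_eq_norm]; exact dist_triangle _ _ _
      _ ≤ r + ε := by rw [dist_comm]; linarith [mem_ball.1 hyx]
  obtain ⟨c, hcS, hsc⟩ := mem_iUnion₂.1 (hcover hs)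
  refine mem_biUnion (Finset.mem_image_of_mem _ hcS) ?_
  have : dist (p + s • u) (p + c • u) = dist s c := by
    rw [dist_add_left, dist_eq_norm, ← sub_smul, norm_smul, hu, mul_one, Real.dist_eq,
      Real.norm_eq_abs]
  rw [mem_closedBall]
  linarith [dist_triangle y (p + s • u) (p + c • u), mem_closedBall.1 hsc]

end Line

theorem measure_le_card_mul_of_subset_biUnion_closedBall {X : Type*} [PseudoMetricSpace X]
    [MeasurableSpace X] {μ : Measure X} {P S : Set X} {s : Finset X} {ρ R : ℝ} {M : ℝ≥0∞}
    (hSP : S ⊆ P) (hS : S ⊆ ⋃ c ∈ s, closedBall c ρ) (hρR : 2 * ρ < R)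
    (hM : ∀ q ∈ P, μ (ball q R ∩ P) ≤ M) : μ S ≤ s.card * M := by
  have hpiece : ∀ c ∈ s, μ (closedBall c ρ ∩ S) ≤ M := by
    intro c _
    rcases (closedBall c ρ ∩ S).eq_empty_or_nonempty with h | ⟨q, hqc, hqS⟩
    · simp [h]
    refine (measure_mono ?_).trans (hM q (hSP hqS))
    rintro y ⟨hyc, hyS⟩
    refine ⟨mem_ball.2 ?_, hSP hyS⟩
    linarith [dist_triangle_right y q c, mem_closedBall.1 hyc, mem_closedBall.1 hqc]
  calc μ S = μ (⋃ c ∈ s, closedBall c ρ ∩ S) := by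
        rw [← iUnion₂_inter, inter_eq_right.2 hS]
    _ ≤ ∑ c ∈ s, μ (closedBall c ρ ∩ S) := measure_biUnion_finset_le _ _
    _ ≤ s.card * M := by simpa using Finset.sum_le_card_nsmul _ _ _ hpiece

def cOut (δ Cμ : ℝ) : ℝ := 2 * (4 * 5 ^ δ * Cμ ^ 2) ^ (1 / (δ - 1))

section cOut

variable {δ Cμ : ℝ}

theorem forty_le_cOut (hδ₁ : 1 < δ) (hδ₂ : δ ≤ 2) (hCμ : 1 ≤ Cμ) : 40 ≤ cOut δ Cμ := by
  have h5 : (5 : ℝ) ≤ 5 ^ δ := by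
    simpa using Real.rpow_le_rpow_of_exponent_le (x := 5) (by norm_num) hδ₁.le
  have hA : 20 ≤ 4 * 5 ^ δ * Cμ ^ 2 := by nlinarith
  have hexp : 1 ≤ 1 / (δ - 1) := by rw [le_div_iff₀ (by linarith)]; linarith
  have := Real.self_le_rpow_of_one_le (by linarith : (1 : ℝ) ≤ 4 * 5 ^ δ * Cμ ^ 2) hexp
  unfold cOut
  linarith

theorem cOut_rpow_sub_one (hδ : 1 < δ) :
    cOut δ Cμ ^ (δ - 1) = 2 ^ (δ - 1) * (4 * 5 ^ δ * Cμ ^ 2) := by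
  have hA : 0 ≤ 4 * 5 ^ δ * Cμ ^ 2 := by positivity
  rw [cOut, Real.mul_rpow zero_le_two (by positivity), ← Real.rpow_mul hA,
    one_div_mul_cancel (by linarith), Real.rpow_one]

/-- `C̃_μ⁻¹ r^δ` exceeds the upper-regularity mass of `r / ε + 3` balls of radius `5ε`,
where `ε = r / C_out`. -/
theorem cOut_cover_mass_lt (hδ : 1 < δ) (hCμ : 0 < Cμ) (hC : 1 < cOut δ Cμ) {r : ℝ} (hr : 0 < r) :
    (r / (r / cOut δ Cμ) + 3) * (Cμ * (5 * (r / cOut δ Cμ)) ^ δ) < Cμ⁻¹ * r ^ δ := by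
  set C := cOut δ Cμ
  have hC0 : 0 < C := by linarith
  have hCδ : C ^ δ = C * (2 ^ (δ - 1) * (4 * 5 ^ δ * Cμ ^ 2)) := by
    rw [← cOut_rpow_sub_one hδ, ← Real.rpow_one_add' hC0.le (by linarith)]; ring_nf
  have h2 : 1 ≤ (2 : ℝ) ^ (δ - 1) := Real.one_le_rpow (by norm_num) (by linarith)
  rw [div_div_cancel₀ hr.ne', Real.mul_rpow (by norm_num) (by positivity),
    Real.div_rpow hr.le hC0.le, hCδ]
  have h5 : 0 < (5 : ℝ) ^ δ := by positivity
  have hrδ : 0 < r ^ δ := by positivity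
  have hgain : C + 3 < C * 2 ^ (δ - 1) * 4 := by nlinarith
  rw [← sub_pos]
  field_simp
  nlinarith [mul_pos hrδ (sub_pos.2 hgain)]

end cOut

/-- **Non-concentration near lines** (Lemma 3.6). A `δ`-regular set `P ⊆ ℝ²` with `δ > 1`
cannot concentrate near a line: for every `x ∈ P`, line `L = {p + t v}` and `r ∈ (0, 1/2)`
there is `y ∈ B(x,r) ∩ P` with `dist(y, L) ≥ r / C_out`, `C_out = 2(4·5^δ C̃_μ²)^(1/(δ-1))`. -/
theorem nonconcentration_near_lines (δ : ℝ) (hδ : δ ∈ Set.Ioo (1 : ℝ) 2)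
    (P : Set (EuclideanSpace ℝ (Fin 2)))
    (μ : Measure (EuclideanSpace ℝ (Fin 2))) (Cμ : ℝ) (hCμ : 1 ≤ Cμ)
    (hreg : ∀ x₀ ∈ P, ∀ r : ℝ, r ∈ Set.Icc (0 : ℝ) 1 →
      ENNReal.ofReal (Cμ⁻¹ * r ^ δ) ≤ μ (Metric.ball x₀ r ∩ P) ∧
      μ (Metric.ball x₀ r ∩ P) ≤ ENNReal.ofReal (Cμ * r ^ δ)) :
    ∀ x ∈ P, ∀ p v : EuclideanSpace ℝ (Fin 2), v ≠ 0 →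
      ∀ r : ℝ, 0 < r → r < 1 / 2 →
        ∃ y ∈ Metric.ball x r ∩ P,
          r / (2 * (4 * (5 : ℝ) ^ δ * Cμ ^ 2) ^ (1 / (δ - 1))) ≤
            Metric.infDist y {z | ∃ t : ℝ, z = p + t • v} := by
  intro x hx p v hv r hr hr2
  have hC : 40 ≤ cOut δ Cμ := forty_le_cOut hδ.1 hδ.2.le hCμ
  set ε := r / cOut δ Cμ
  have hε : 0 < ε := by positivity
  have h5ε : 5 * ε ≤ 1 := by
    linarith [div_le_div_of_nonneg_left hr.le (by norm_num : (0 : ℝ) < 40) hC]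
  by_contra! hnear
  have hline : {z | ∃ t : ℝ, z = p + t • v}.Nonempty := ⟨p, 0, by simp⟩
  obtain ⟨s, hs, hcover⟩ := exists_finset_card_le_ball_inter_thickening_line_subset hv x hr.le hε
  have hupper : μ (ball x r ∩ P) ≤ s.card * ENNReal.ofReal (Cμ * (5 * ε) ^ δ) :=
    measure_le_card_mul_of_subset_biUnion_closedBall inter_subset_right
      (fun y hy => hcover ⟨hy.1, (mem_thickening_iff_infDist_lt hline).2 (hnear y hy)⟩)
      (by linarith) fun q hq => (hreg q hq (5 * ε) ⟨by positivity, h5ε⟩).2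
  have hlower := (hreg x hx r ⟨hr.le, by linarith⟩).1
  rw [← ENNReal.ofReal_natCast, ← ENNReal.ofReal_mul (Nat.cast_nonneg _)] at hupper
  have hmass : Cμ⁻¹ * r ^ δ ≤ (r / ε + 3) * (Cμ * (5 * ε) ^ δ) :=
    (ENNReal.ofReal_le_ofReal_iff (by positivity)).1 <| (hlower.trans hupper).trans <|
      ENNReal.ofReal_le_ofReal (mul_le_mul_of_nonneg_right hs (by positivity))
  exact hmass.not_gt (cOut_cover_mass_lt hδ.1 (by linarith) (by linarith) hr)
end
end

section
/- Let X ⊂ ℝ^d be ν-porous on lines from scales α₀ to α₁, let α₀ < r < α₁ and let 0 < ν' < ν. Then the neighborhood X + B(0,r) is ν'-porous on lines from scales r/(ν − ν') to α₁. -/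
open MeasureTheory Metric Set Function
open scoped ENNReal Pointwise

noncomputable section

/-!
If `B(x, νR)` misses `X` and `(ν - ν') R > r`, then `B(x, ν'R)` misses `X + B(0, r)`, so segments
longer than `α₀` are handled by the porosity of `X` itself. A shorter segment is first stretched to
a length `R'` between `α₀` and `r`; the hole found on the stretched segment is moved back onto the
original one at a cost of at most `R' - R`, which is affordable because in this regime `ν > 1`.
-/

theorem Disjoint.ball_add_closedBall_zero {E : Type*} [SeminormedAddCommGroup E] {X : Set E}
    {x : E} {ρ r : ℝ} (h : Disjoint (ball x (ρ + r)) X) :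
    Disjoint (ball x ρ) (X + closedBall 0 r) := by
  rw [Set.disjoint_left]
  rintro _ hy ⟨z, hz, w, hw, rfl⟩
  refine Set.disjoint_left.1 h (mem_ball.2 ?_) hz
  rw [mem_ball] at hy
  rw [mem_closedBall_zero_iff] at hw
  calc dist z x ≤ dist z (z + w) + dist (z + w) x := dist_triangle _ _ _
    _ < ρ + r := by rw [dist_self_add_right]; linarith

theorem exists_mem_segment_dist_le_of_mem_segment_lineMap {E : Type*}
    [SeminormedAddCommGroup E] [NormedSpace ℝ E] {a b x' : E} {t : ℝ} (ht : 1 ≤ t)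
    (hx' : x' ∈ segment ℝ a (AffineMap.lineMap a b t)) :
    ∃ x ∈ segment ℝ a b, dist x x' ≤ (t - 1) * dist a b := by
  rw [segment_eq_image_lineMap] at hx' ⊢
  obtain ⟨s, ⟨hs₀, hs₁⟩, rfl⟩ := hx'
  refine ⟨AffineMap.lineMap a b (min (s * t) 1),
    mem_image_of_mem _ ⟨le_min (by positivity) zero_le_one, min_le_right _ _⟩, ?_⟩
  rw [AffineMap.lineMap_lineMap_right, dist_lineMap_lineMap, Real.dist_eq]
  gcongr
  have hst : s * t ≤ t := mul_le_of_le_one_left (by linarith) hs₁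
  rcases le_total (s * t) 1 with h | h
  · rw [min_eq_left h, sub_self, abs_zero]; linarith
  · rw [min_eq_right h, abs_sub_comm, abs_of_nonneg (by linarith)]; linarith

theorem PorousOnLines.exists_disjoint_ball_of_le {d : ℕ} {ν α₀ α₁ R' : ℝ}
    {X : Set (EuclideanSpace ℝ (Fin d))} (hpor : PorousOnLines ν α₀ α₁ X)
    {a b : EuclideanSpace ℝ (Fin d)} (hab : 0 < dist a b) (hR' : dist a b ≤ R')
    (h₀ : α₀ < R') (h₁ : R' < α₁) :
    ∃ x ∈ segment ℝ a b, Disjoint (ball x (ν * R' - (R' - dist a b))) X := by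
  set b' := AffineMap.lineMap a b (R' / dist a b)
  have hab' : dist a b' = R' := by
    rw [dist_left_lineMap, Real.norm_of_nonneg (div_nonneg (hab.le.trans hR') hab.le),
      div_mul_cancel₀ _ hab.ne']
  obtain ⟨x', hx', hdisj⟩ := hpor a b' (hab' ▸ h₀) (hab' ▸ h₁)
  obtain ⟨x, hx, hxx'⟩ := exists_mem_segment_dist_le_of_mem_segment_lineMap
    ((one_le_div hab).2 hR') hx'
  refine ⟨x, hx, hdisj.mono_left (ball_subset_ball' ?_)⟩
  rw [sub_mul, div_mul_cancel₀ _ hab.ne', one_mul] at hxx'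
  rw [hab']
  linarith

/-- **Porosity of neighborhoods** (Lemma A.2(a)): if `X` is `ν`-porous on lines from scales
`α₀` to `α₁`, `α₀ < r < α₁` and `0 < ν' < ν`, then `X + B(0,r)` is `ν'`-porous on lines from
scales `r/(ν-ν')` to `α₁`. -/
theorem porous_on_lines_nbhd {d : ℕ} (ν ν' α₀ α₁ r : ℝ)
    (X : Set (EuclideanSpace ℝ (Fin d)))
    (hpor : PorousOnLines ν α₀ α₁ X) (hr₀ : α₀ < r) (hr₁ : r < α₁)
    (hν'₀ : 0 < ν') (hν' : ν' < ν) :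
    PorousOnLines ν' (r / (ν - ν')) α₁ (X + Metric.closedBall 0 r) := by
  intro a b hlow hup
  set R := dist a b
  have hgap : r < R * (ν - ν') := (div_lt_iff₀ (sub_pos.2 hν')).1 hlow
  suffices ∃ x ∈ segment ℝ a b, Disjoint (ball x (ν' * R + r)) X by
    obtain ⟨x, hx, hdisj⟩ := this
    exact ⟨x, hx, hdisj.ball_add_closedBall_zero⟩
  rcases lt_or_ge α₀ R with hR | hR
  · obtain ⟨x, hx, hdisj⟩ := hpor a b hR hup
    exact ⟨x, hx, hdisj.mono_left (ball_subset_ball (by linarith))⟩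
  · -- Below scale `α₀` the gap `(ν - ν') R > r > R` forces `ν > 1`.
    have hRpos : 0 < R := by nlinarith [dist_nonneg (x := a) (y := b)]
    have hν : 1 < ν := by nlinarith
    obtain ⟨x, hx, hdisj⟩ := hpor.exists_disjoint_ball_of_le (R' := (α₀ + r) / 2) hRpos
      (by linarith) (by linarith) (by linarith)
    exact ⟨x, hx, hdisj.mono_left (ball_subset_ball (by nlinarith))⟩
end
end

section
/- There exists a constant C_d > 0 depending only on the dimension d with the following property. Let X ⊂ ℝ^d be ν-porous on balls from scales α₀ to α₁ with ν ∈ (0,1), and set γ = ν^d/(C_d(1 + |log ν|)). Then for every ball B of radius R with α₀ < R < α₁, the Lebesgue outer measure of X ∩ B satisfies |X ∩ B| ≤ C_d R^d (α₀/R)^γ. -/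
/-!
Cut a cube of side `ℓ` into `N ^ d` subcubes of side `ℓ / N`, where `N ≈ d / ν`. Porosity at
scale `ℓ` yields a point of the cube whose `νℓ`-ball misses `X`, and this ball swallows the whole
subcube containing the point, so `X` meets at most `N ^ d - 1` of the subcubes. Iterating over the
`≈ log_N (R / α₀)` scales between `α₀` and `R` multiplies the measure by `1 - N⁻ᵈ` at each step,
which amounts to a factor `(α₀ / R) ^ γ` as soon as `γ log N ≤ N⁻ᵈ`; with `N ≈ d / ν` this holds
for `γ = ν ^ d / (C_d (1 + |log ν|))`. Finally, a ball of radius `R` is covered by `2 ^ d` cubes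
of side `R`.
-/

open MeasureTheory Metric Set Function
open scoped ENNReal Pointwise

noncomputable section

open Filter Topology

section

variable {d : ℕ}

theorem exists_nat_lt_le_le_add_one {N : ℕ} (hN : N ≠ 0) {s : ℝ} (hs₀ : 0 ≤ s) (hsN : s ≤ N) :
    ∃ k < N, (k : ℝ) ≤ s ∧ s ≤ k + 1 := by
  refine ⟨min ⌊s⌋₊ (N - 1), by omega, ?_, ?_⟩
  · exact (Nat.cast_le.2 (min_le_left _ _)).trans (Nat.floor_le hs₀)
  · rcases min_cases ⌊s⌋₊ (N - 1) with ⟨h, -⟩ | ⟨h, -⟩ <;> rw [h]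
    · exact (Nat.lt_floor_add_one s).le
    · rwa [Nat.cast_pred (Nat.pos_of_ne_zero hN), sub_add_cancel]

def cube (c : EuclideanSpace ℝ (Fin d)) (ℓ : ℝ) : Set (EuclideanSpace ℝ (Fin d)) :=
  {x | ∀ i, |x i - c i| ≤ ℓ / 2}

def subcube (c : EuclideanSpace ℝ (Fin d)) (ℓ : ℝ) (N : ℕ) (k : Fin d → Fin N) :
    Set (EuclideanSpace ℝ (Fin d)) :=
  cube (WithLp.toLp 2 fun i => c i - ℓ / 2 + (k i + 1 / 2) * (ℓ / N)) (ℓ / N)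

theorem volume_cube (c : EuclideanSpace ℝ (Fin d)) {ℓ : ℝ} (hℓ : 0 ≤ ℓ) :
    volume (cube c ℓ) = ENNReal.ofReal (ℓ ^ d) := by
  have : cube c ℓ = (MeasurableEquiv.toLp 2 (Fin d → ℝ)).symm ⁻¹'
      univ.pi fun i => Icc (c i - ℓ / 2) (c i + ℓ / 2) := by
    ext x
    simp only [cube, mem_ofPred_eq, mem_preimage, mem_univ_pi, mem_Icc, abs_le,
      MeasurableEquiv.coe_toLp_symm]
    exact forall_congr' fun i => by constructor <;> intro h <;> constructor <;> linarith [h.1, h.2]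
  rw [this, (EuclideanSpace.volume_preserving_symm_measurableEquiv_toLp (Fin d)).measure_preimage
    (by measurability), volume_pi_pi]
  simp [Real.volume_Icc, ← ENNReal.ofReal_pow hℓ]

theorem closedBall_subset_cube (c : EuclideanSpace ℝ (Fin d)) (ℓ : ℝ) :
    closedBall c (ℓ / 2) ⊆ cube c ℓ := fun x hx i =>
  (PiLp.dist_apply_le x c i).trans hx

theorem EuclideanSpace.dist_le_sqrt_mul_of_forall_dist_apply_le
    {x y : EuclideanSpace ℝ (Fin d)} {h : ℝ} (hh : 0 ≤ h) (H : ∀ i, dist (x i) (y i) ≤ h) :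
    dist x y ≤ √d * h := by
  rw [EuclideanSpace.dist_eq, ← Real.sqrt_sq hh, ← Real.sqrt_mul (Nat.cast_nonneg d)]
  refine Real.sqrt_le_sqrt ?_
  calc ∑ i, dist (x i) (y i) ^ 2 ≤ ∑ _i : Fin d, h ^ 2 :=
        Finset.sum_le_sum fun i _ => pow_le_pow_left₀ dist_nonneg (H i) 2
    _ = d * h ^ 2 := by simp

theorem cube_subset_ball_of_mem {c x : EuclideanSpace ℝ (Fin d)} {ℓ r : ℝ} (hℓ : 0 ≤ ℓ)
    (hx : x ∈ cube c ℓ) (hr : √d * ℓ < r) : cube c ℓ ⊆ ball x r := fun y hy => by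
  refine (EuclideanSpace.dist_le_sqrt_mul_of_forall_dist_apply_le hℓ fun i => ?_).trans_lt hr
  rw [Real.dist_eq]
  have := hx i; have := hy i
  rw [abs_le] at *
  constructor <;> linarith

theorem cube_subset_iUnion_subcube (c : EuclideanSpace ℝ (Fin d)) {ℓ : ℝ} (hℓ : 0 < ℓ) {N : ℕ}
    (hN : N ≠ 0) : cube c ℓ ⊆ ⋃ k, subcube c ℓ N k := by
  intro x hx
  have hδ : 0 < ℓ / N := by positivity
  have H : ∀ i, ∃ k < N, (k : ℝ) ≤ (x i - c i + ℓ / 2) / (ℓ / N) ∧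
      (x i - c i + ℓ / 2) / (ℓ / N) ≤ k + 1 := fun i => by
    have := abs_le.1 (hx i)
    refine exists_nat_lt_le_le_add_one hN (div_nonneg (by linarith) hδ.le) ?_
    rw [div_le_iff₀ hδ, mul_div_cancel₀ _ (Nat.cast_ne_zero.2 hN)]
    linarith
  choose k hkN hk₁ hk₂ using H
  refine mem_iUnion.2 ⟨fun i => ⟨k i, hkN i⟩, fun i => ?_⟩
  have h₁ := (le_div_iff₀ hδ).1 (hk₁ i)
  have h₂ := (div_le_iff₀ hδ).1 (hk₂ i)
  rw [abs_le]
  constructor <;> linarith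

theorem measure_inter_cube_le_sum_subcube (μ : Measure (EuclideanSpace ℝ (Fin d)))
    (X : Set (EuclideanSpace ℝ (Fin d))) (c : EuclideanSpace ℝ (Fin d)) {ℓ : ℝ} (hℓ : 0 < ℓ)
    {N : ℕ} (hN : N ≠ 0) : μ (X ∩ cube c ℓ) ≤ ∑ k, μ (X ∩ subcube c ℓ N k) := by
  refine (measure_mono (inter_subset_inter_right X (cube_subset_iUnion_subcube c hℓ hN))).trans ?_
  rw [inter_iUnion]
  exact measure_iUnion_fintype_le _ _

theorem measure_inter_cube_le_of_disjoint_subcube (μ : Measure (EuclideanSpace ℝ (Fin d)))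
    {X : Set (EuclideanSpace ℝ (Fin d))} (c : EuclideanSpace ℝ (Fin d)) {ℓ m : ℝ} (hℓ : 0 < ℓ)
    {N : ℕ} (hN : N ≠ 0) {k₀ : Fin d → Fin N} (hk₀ : Disjoint (subcube c ℓ N k₀) X)
    (H : ∀ k, μ (X ∩ subcube c ℓ N k) ≤ ENNReal.ofReal (m * (ℓ / N) ^ d)) :
    μ (X ∩ cube c ℓ) ≤ ENNReal.ofReal ((1 - ((N : ℝ) ^ d)⁻¹) * m * ℓ ^ d) := by
  calc μ (X ∩ cube c ℓ) ≤ ∑ k, μ (X ∩ subcube c ℓ N k) :=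
        measure_inter_cube_le_sum_subcube μ X c hℓ hN
    _ = ∑ k ∈ Finset.univ.erase k₀, μ (X ∩ subcube c ℓ N k) := by
        rw [← Finset.add_sum_erase _ _ (Finset.mem_univ k₀), inter_comm,
          hk₀.inter_eq, measure_empty, zero_add]
    _ ≤ (Finset.univ.erase k₀).card • ENNReal.ofReal (m * (ℓ / N) ^ d) :=
        Finset.sum_le_card_nsmul _ _ _ fun k _ => H k
    _ = ENNReal.ofReal ((1 - ((N : ℝ) ^ d)⁻¹) * m * ℓ ^ d) := by
        rw [Finset.card_erase_of_mem (Finset.mem_univ _), Finset.card_univ, Fintype.card_fun,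
          Fintype.card_fin, Fintype.card_fin, nsmul_eq_mul, ← ENNReal.ofReal_natCast,
          ← ENNReal.ofReal_mul (Nat.cast_nonneg _), Nat.cast_pred (by positivity)]
        congr 1
        push_cast
        rw [div_pow]
        field_simp

theorem pow_le_rpow_mul_rpow {q t b γ : ℝ} {n : ℕ} (hq : 0 ≤ q) (ht : 0 < t) (hb : 0 < b)
    (hγ : 0 ≤ γ) (hqb : q * b ^ γ ≤ 1) (htb : 1 ≤ t * b ^ (n + 1)) :
    q ^ n ≤ b ^ γ * t ^ γ := by
  have hbγ : 0 < b ^ γ := Real.rpow_pos_of_pos hb γ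
  refine le_of_mul_le_mul_right ?_ (pow_pos hbγ n)
  calc q ^ n * (b ^ γ) ^ n = (q * b ^ γ) ^ n := (mul_pow q _ n).symm
    _ ≤ 1 := pow_le_one₀ (by positivity) hqb
    _ ≤ (t * b ^ (n + 1)) ^ γ := Real.one_le_rpow htb hγ
    _ = b ^ γ * t ^ γ * (b ^ γ) ^ n := by
        rw [Real.mul_rpow ht.le (by positivity), ← Real.rpow_pow_comm hb.le, pow_succ]
        ring

theorem div_mul_log_le_inv_pow {ν C N : ℝ} (hν : 0 < ν) (hN : 1 ≤ N) (hνN : ν * N ≤ d + 2)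
    (hC : ((d : ℝ) + 2) ^ (d + 1) ≤ C) :
    ν ^ d / (C * (1 + |Real.log ν|)) * Real.log N ≤ (N ^ d)⁻¹ := by
  have hN₀ : 0 < N := by linarith
  have hlog : Real.log N ≤ (d + 2) * (1 + |Real.log ν|) := by
    have h₁ := Real.log_le_sub_one_of_pos (mul_pos hν hN₀)
    have h₂ := neg_le_abs (Real.log ν)
    rw [Real.log_mul hν.ne' hN₀.ne'] at h₁
    nlinarith [abs_nonneg (Real.log ν)]
  have hC₀ : 0 < C := lt_of_lt_of_le (by positivity) hC
  rw [div_mul_eq_mul_div, div_le_iff₀ (by positivity)]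
  calc ν ^ d * Real.log N = (N ^ d)⁻¹ * ((ν * N) ^ d * Real.log N) := by
        field_simp
        ring
    _ ≤ (N ^ d)⁻¹ * ((d + 2) ^ d * ((d + 2) * (1 + |Real.log ν|))) := by
        gcongr
        exact Real.log_nonneg hN
    _ = (N ^ d)⁻¹ * ((d + 2) ^ (d + 1) * (1 + |Real.log ν|)) := by ring
    _ ≤ (N ^ d)⁻¹ * (C * (1 + |Real.log ν|)) := by gcongr

theorem exists_nat_sqrt_lt_mul_le_add_two {ν : ℝ} (hν₀ : 0 < ν) (hν₁ : ν ≤ 1) :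
    ∃ N : ℕ, 2 ≤ N ∧ √d < ν * N ∧ ν * N ≤ d + 2 := by
  refine ⟨⌊d / ν⌋₊ + 2, by omega, ?_, ?_⟩
  · have hsqrt : √d ≤ d := Real.sqrt_le_self_iff.2 (by rcases d with _ | d <;> simp)
    have := (div_lt_iff₀ hν₀).1 (Nat.lt_floor_add_one ((d : ℝ) / ν))
    push_cast
    nlinarith
  · have := (le_div_iff₀ hν₀).1 (Nat.floor_le (div_nonneg d.cast_nonneg hν₀.le))
    push_cast
    nlinarith

namespace PorousOnBalls

variable {ν α₀ α₁ : ℝ} {X : Set (EuclideanSpace ℝ (Fin d))}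

theorem exists_disjoint_subcube (hX : PorousOnBalls ν α₀ α₁ X) {N : ℕ} (hN : √d < ν * N)
    (c : EuclideanSpace ℝ (Fin d)) {ℓ : ℝ} (hℓ : 0 < ℓ) (hα₀ : α₀ < ℓ) (hα₁ : ℓ < α₁) :
    ∃ k, Disjoint (subcube c ℓ N k) X := by
  have hN0 : N ≠ 0 := by
    rintro rfl
    exact (Real.sqrt_nonneg _).not_gt (by simpa using hN)
  obtain ⟨x, hxc, hx⟩ := hX c ℓ hα₀ hα₁
  obtain ⟨k, hk⟩ :=
    mem_iUnion.1 (cube_subset_iUnion_subcube c hℓ hN0 (closedBall_subset_cube c ℓ hxc))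
  refine ⟨k, hx.mono_left (cube_subset_ball_of_mem (by positivity) hk ?_)⟩
  calc √d * (ℓ / N) < ν * N * (ℓ / N) := by gcongr
    _ = ν * ℓ := by field_simp

theorem volume_inter_cube_le (hX : PorousOnBalls ν α₀ α₁ X) (hα₀ : 0 ≤ α₀) {N : ℕ}
    (hN : √d < ν * N) (hN₂ : 2 ≤ N) (n : ℕ) (c : EuclideanSpace ℝ (Fin d)) {ℓ : ℝ} (hℓ : 0 < ℓ)
    (hα₁ : ℓ < α₁) (hn : α₀ * N ^ n ≤ ℓ) :
    volume (X ∩ cube c ℓ) ≤ ENNReal.ofReal ((1 - ((N : ℝ) ^ d)⁻¹) ^ n * ℓ ^ d) := by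
  induction n generalizing c ℓ with
  | zero => simpa using (measure_mono inter_subset_right).trans (volume_cube c hℓ.le).le
  | succ n ih =>
    have hN₁ : (1 : ℝ) ≤ N := by exact_mod_cast (by omega : 1 ≤ N)
    have hα₀ℓ : α₀ < ℓ := by
      rcases hα₀.eq_or_lt with rfl | hα₀
      · exact hℓ
      · have hNn : (1 : ℝ) < N ^ (n + 1) := one_lt_pow₀ (by exact_mod_cast hN₂) n.succ_ne_zero
        exact (lt_mul_of_one_lt_right hα₀ hNn).trans_le hn
    obtain ⟨k₀, hk₀⟩ := hX.exists_disjoint_subcube hN c hℓ hα₀ℓ hα₁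
    rw [pow_succ']
    refine measure_inter_cube_le_of_disjoint_subcube volume c hℓ (by positivity) hk₀ fun k => ?_
    apply ih _ (by positivity) ((div_le_self hℓ.le hN₁).trans_lt hα₁)
    rw [le_div_iff₀ (by positivity), mul_assoc, ← pow_succ]
    exact hn

theorem volume_inter_closedBall_le (hX : PorousOnBalls ν α₀ α₁ X) (hα₀ : 0 ≤ α₀) {N : ℕ}
    (hN : √d < ν * N) (hN₂ : 2 ≤ N) (n : ℕ) (c : EuclideanSpace ℝ (Fin d)) {R : ℝ} (hR : 0 < R)
    (hα₁ : R < α₁) (hn : α₀ * N ^ n ≤ R) :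
    volume (X ∩ closedBall c R) ≤ ENNReal.ofReal (2 ^ d * (1 - ((N : ℝ) ^ d)⁻¹) ^ n * R ^ d) := by
  calc volume (X ∩ closedBall c R) ≤ volume (X ∩ cube c (2 * R)) := by
        gcongr
        simpa using closedBall_subset_cube c (2 * R)
    _ ≤ ∑ k, volume (X ∩ subcube c (2 * R) 2 k) :=
        measure_inter_cube_le_sum_subcube volume X c (by positivity) two_ne_zero
    _ ≤ ∑ _k : Fin d → Fin 2, ENNReal.ofReal ((1 - ((N : ℝ) ^ d)⁻¹) ^ n * R ^ d) :=
        Finset.sum_le_sum fun k _ => by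
          rw [subcube, Nat.cast_ofNat, mul_div_cancel_left₀ R two_ne_zero]
          exact hX.volume_inter_cube_le hα₀ hN hN₂ n _ hR hα₁ hn
    _ = ENNReal.ofReal (2 ^ d * (1 - ((N : ℝ) ^ d)⁻¹) ^ n * R ^ d) := by
        rw [mul_assoc, ENNReal.ofReal_mul (by positivity : (0 : ℝ) ≤ 2 ^ d)]
        simp

theorem volume_inter_closedBall_eq_zero (hX : PorousOnBalls ν 0 α₁ X) {N : ℕ}
    (hN : √d < ν * N) (hN₂ : 2 ≤ N) (c : EuclideanSpace ℝ (Fin d)) {R : ℝ} (hR : 0 < R)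
    (hα₁ : R < α₁) : volume (X ∩ closedBall c R) = 0 := by
  have hN₁ : (1 : ℝ) ≤ N := by exact_mod_cast (by omega : 1 ≤ N)
  have hη₀ : 0 < ((N : ℝ) ^ d)⁻¹ := by positivity
  have hη₁ : ((N : ℝ) ^ d)⁻¹ ≤ 1 := inv_le_one_of_one_le₀ (one_le_pow₀ hN₁)
  have hlim : Tendsto (fun n : ℕ => ENNReal.ofReal (2 ^ d * (1 - ((N : ℝ) ^ d)⁻¹) ^ n * R ^ d))
      atTop (𝓝 (ENNReal.ofReal (2 ^ d * 0 * R ^ d))) :=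
    ENNReal.tendsto_ofReal (((tendsto_pow_atTop_nhds_zero_of_lt_one (by linarith)
      (by linarith)).const_mul _).mul_const _)
  have := ge_of_tendsto' hlim fun n =>
    hX.volume_inter_closedBall_le le_rfl hN hN₂ n c hR hα₁ (by simpa using hR.le)
  simpa using this

theorem volume_inter_closedBall_le_rpow (hX : PorousOnBalls ν α₀ α₁ X) (hα₀ : 0 ≤ α₀) {N : ℕ}
    (hN : √d < ν * N) (hN₂ : 2 ≤ N) {γ : ℝ} (hγ : 0 < γ)
    (hγN : γ * Real.log N ≤ ((N : ℝ) ^ d)⁻¹) (c : EuclideanSpace ℝ (Fin d)) {R : ℝ}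
    (hα₀R : α₀ < R) (hα₁ : R < α₁) :
    volume (X ∩ closedBall c R) ≤ ENNReal.ofReal (3 * 2 ^ d * R ^ d * (α₀ / R) ^ γ) := by
  have hR : 0 < R := hα₀.trans_lt hα₀R
  have hN₁ : (1 : ℝ) < N := by exact_mod_cast hN₂
  set η : ℝ := ((N : ℝ) ^ d)⁻¹
  have hη₁ : η ≤ 1 := inv_le_one_of_one_le₀ (one_le_pow₀ hN₁.le)
  have hNγ : (N : ℝ) ^ γ ≤ Real.exp η := by
    rw [Real.rpow_def_of_pos (by positivity), mul_comm]
    exact Real.exp_le_exp.2 hγN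
  rcases hα₀.eq_or_lt with rfl | hα₀
  · simp [hX.volume_inter_closedBall_eq_zero hN hN₂ c hR hα₁]
  obtain ⟨n, hn₁, hn₂⟩ := exists_nat_pow_near ((one_le_div hα₀).2 hα₀R.le) hN₁
  refine (hX.volume_inter_closedBall_le hα₀.le hN hN₂ n c hR hα₁ ?_).trans
    (ENNReal.ofReal_le_ofReal ?_)
  · rwa [le_div_iff₀ hα₀, mul_comm] at hn₁
  have hq : (1 - η) ^ n ≤ 3 * (α₀ / R) ^ γ := by
    refine (pow_le_rpow_mul_rpow (t := α₀ / R) (b := N) (by linarith) (by positivity)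
      (by positivity) hγ.le ?_ ?_).trans ?_
    · calc (1 - η) * (N : ℝ) ^ γ ≤ Real.exp (-η) * Real.exp η :=
            mul_le_mul (Real.one_sub_le_exp_neg η) hNγ (by positivity) (Real.exp_pos _).le
        _ = 1 := by rw [← Real.exp_add, neg_add_cancel, Real.exp_zero]
    · rw [div_mul_eq_mul_div, one_le_div hR]
      exact ((div_lt_iff₀' hα₀).1 hn₂).le
    · gcongr
      exact hNγ.trans ((Real.exp_le_exp.2 hη₁).trans (Real.exp_one_lt_d9.le.trans (by norm_num)))
  calc 2 ^ d * (1 - η) ^ n * R ^ d ≤ 2 ^ d * (3 * (α₀ / R) ^ γ) * R ^ d := by gcongr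
    _ = 3 * 2 ^ d * R ^ d * (α₀ / R) ^ γ := by ring

end PorousOnBalls

end

theorem measure_of_ball_porous_general (d : ℕ) :
    ∃ Cd > (0 : ℝ),
      ∀ (ν α₀ α₁ : ℝ) (X : Set (EuclideanSpace ℝ (Fin d))),
        ν ∈ Set.Ioo (0 : ℝ) 1 → 0 ≤ α₀ →
        PorousOnBalls ν α₀ α₁ X →
        ∀ (c : EuclideanSpace ℝ (Fin d)) (R : ℝ), α₀ < R → R < α₁ →
          volume (X ∩ Metric.closedBall c R) ≤
            ENNReal.ofReal
              (Cd * R ^ d * (α₀ / R) ^ (ν ^ d / (Cd * (1 + |Real.log ν|)))) := by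
  obtain ⟨Cd, hCd₁, hCd₂⟩ : ∃ Cd : ℝ, ((d : ℝ) + 2) ^ (d + 1) ≤ Cd ∧ 3 * 2 ^ d ≤ Cd :=
    ⟨3 * 2 ^ d * ((d : ℝ) + 2) ^ (d + 1),
      le_mul_of_one_le_left (by positivity) (one_le_mul_of_one_le_of_one_le (by norm_num)
        (one_le_pow₀ (by norm_num))),
      le_mul_of_one_le_right (by positivity) (one_le_pow₀ (by linarith))⟩
  have hCd₀ : 0 < Cd := lt_of_lt_of_le (by positivity) hCd₁
  refine ⟨Cd, hCd₀, ?_⟩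
  rintro ν α₀ α₁ X ⟨hν₀, hν₁⟩ hα₀ hX c R hα₀R hα₁
  obtain ⟨N, hN₂, hN, hνN⟩ := exists_nat_sqrt_lt_mul_le_add_two hν₀ hν₁.le
  refine (hX.volume_inter_closedBall_le_rpow hα₀ hN hN₂ (by positivity)
    (div_mul_log_le_inv_pow hν₀ (Nat.one_le_cast.2 (by omega)) hνN hCd₁) c hα₀R hα₁).trans
    (ENNReal.ofReal_le_ofReal ?_)
  have hR : 0 < R := hα₀.trans_lt hα₀R
  gcongr

/-- **Measure bound for ball-porous sets** (Lemma A.4): if `X` is `ν`-porous on balls from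
scales `α₀` to `α₁`, then for every ball of radius `R` with `α₀ < R < α₁`,
`|X ∩ B| ≤ C_d R^d (α₀/R)^γ` with `γ = ν^d / (C_d (1 + |log ν|))`. -/
theorem measure_of_ball_porous (d : ℕ) (hd : 1 ≤ d) :
    ∃ Cd > (0 : ℝ),
      ∀ (ν α₀ α₁ : ℝ) (X : Set (EuclideanSpace ℝ (Fin d))),
        ν ∈ Set.Ioo (0 : ℝ) 1 → 0 ≤ α₀ →
        PorousOnBalls ν α₀ α₁ X →
        ∀ (c : EuclideanSpace ℝ (Fin d)) (R : ℝ), α₀ < R → R < α₁ →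
          volume (X ∩ Metric.closedBall c R) ≤
            ENNReal.ofReal
              (Cd * R ^ d * (α₀ / R) ^ (ν ^ d / (Cd * (1 + |Real.log ν|)))) :=
  measure_of_ball_porous_general d
end
end

section
/- Let Y ⊂ ℝ^d be ν-porous on lines from scales α₀ to α₁ with ν ∈ (0,1). Then there exist constants C > 0 and γ > 0 depending only on ν, with γ = ν/(C(1 + |log ν|)), such that for every line segment τ of length R with α₀ < R < α₁, the one-dimensional Lebesgue outer measure (along τ) of τ ∩ Y satisfies |τ ∩ Y| ≤ C R (α₀/R)^γ. -/
/-! Restricted to the segment, `Y` becomes a set `S ⊆ [0, R]` that misses a ball of radius `νL`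
centred in every interval of length `α₀ < L < α₁`. Removing that ball from an interval of length
`L` leaves two intervals of total length at most `(1 - ν) L`; since `2^γ (1 - ν)^(1-γ) ≤ 1` once
`γ ≤ ν / 4`, concavity of `x ↦ x^(1-γ)` makes the bound `|S ∩ I| ≤ α₀^γ |I|^(1-γ)` stable under
this splitting, and on intervals shorter than `α₀` it follows from `|S ∩ I| ≤ |I|`. Splitting `n`
times proves the bound up to an error `(1 - ν)^n |I|`, which tends to zero. -/

open MeasureTheory Metric Set Function
open scoped ENNReal Pointwise

noncomputable section

open Filter Topology

def PorousOnIntervals (ν α₀ α₁ : ℝ) (S : Set ℝ) : Prop :=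
  ∀ t₀ t₁ : ℝ, α₀ < dist t₀ t₁ → dist t₀ t₁ < α₁ →
    ∃ s ∈ segment ℝ t₀ t₁, Disjoint (ball s (ν * dist t₀ t₁)) S

theorem PorousOnLines.porousOnIntervals_preimage {d : ℕ} {ν α₀ α₁ : ℝ}
    {Y : Set (EuclideanSpace ℝ (Fin d))} (hY : PorousOnLines ν α₀ α₁ Y)
    (a : EuclideanSpace ℝ (Fin d)) {u : EuclideanSpace ℝ (Fin d)} (hu : ‖u‖ = 1) :
    PorousOnIntervals ν α₀ α₁ ((fun t : ℝ => a + t • u) ⁻¹' Y) := by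
  set line : ℝ →ᵃ[ℝ] EuclideanSpace ℝ (Fin d) := AffineMap.lineMap a (a + u)
  have line_apply (t : ℝ) : line t = a + t • u := by
    simp [line, AffineMap.lineMap_apply, add_comm]
  have dist_line (s t : ℝ) : dist (line s) (line t) = dist s t := by
    rw [line_apply, line_apply, dist_add_left, dist_eq_norm, dist_eq_norm, ← sub_smul,
      norm_smul, hu, mul_one]
  rw [show (fun t : ℝ => a + t • u) = line from funext fun t => (line_apply t).symm]
  intro t₀ t₁ h₀ h₁
  obtain ⟨x, hx, hdisj⟩ := hY (line t₀) (line t₁) (dist_line _ _ ▸ h₀) (dist_line _ _ ▸ h₁)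
  rw [← image_segment] at hx
  obtain ⟨s, hs, rfl⟩ := hx
  refine ⟨s, hs, disjoint_left.2 fun t ht htY => disjoint_left.1 hdisj ?_ htY⟩
  rw [mem_ball, dist_line, dist_line]
  exact ht

theorem Real.add_rpow_le_two_rpow_mul_rpow_add {p x y : ℝ} (hp₀ : 0 ≤ p) (hp₁ : p ≤ 1)
    (hx : 0 ≤ x) (hy : 0 ≤ y) : x ^ p + y ^ p ≤ 2 ^ (1 - p) * (x + y) ^ p := by
  have h := (Real.concaveOn_rpow hp₀ hp₁).2 (mem_Ici.2 hx) (mem_Ici.2 hy)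
    (by norm_num : (0 : ℝ) ≤ 1 / 2) (by norm_num : (0 : ℝ) ≤ 1 / 2) (by norm_num)
  simp only [smul_eq_mul, ← mul_add] at h
  rw [Real.mul_rpow (by norm_num) (by positivity)] at h
  have h2 : (2 : ℝ) ^ (1 - p) = 2 * (1 / 2) ^ p := by
    rw [Real.rpow_sub two_pos, Real.rpow_one, one_div, Real.inv_rpow zero_le_two, div_eq_mul_inv]
  rw [h2]
  linarith

theorem Real.le_rpow_mul_rpow_one_sub {α γ L : ℝ} (hγ : 0 ≤ γ) (hL : 0 ≤ L) (hLα : L ≤ α) :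
    L ≤ α ^ γ * L ^ (1 - γ) := by
  rcases hL.eq_or_lt with rfl | hL
  · have := Real.rpow_nonneg hLα γ
    positivity
  calc L = L ^ γ * L ^ (1 - γ) := by rw [← Real.rpow_add hL, add_sub_cancel, Real.rpow_one]
    _ ≤ α ^ γ * L ^ (1 - γ) := by gcongr

theorem two_rpow_mul_one_sub_rpow_le_one {ν γ : ℝ} (hν : ν < 1) (hγ₀ : 0 ≤ γ) (hγν : γ ≤ ν / 4) :
    (2 : ℝ) ^ γ * (1 - ν) ^ (1 - γ) ≤ 1 := by
  rw [Real.rpow_def_of_pos two_pos, Real.rpow_def_of_pos (by linarith), ← Real.exp_add,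
    Real.exp_le_one_iff]
  have hlog₂ : Real.log 2 ≤ 1 := by linarith [Real.log_le_sub_one_of_pos two_pos]
  have hlog : Real.log (1 - ν) ≤ -ν := by linarith [Real.log_le_sub_one_of_pos (sub_pos.2 hν)]
  nlinarith [Real.log_nonneg one_le_two]

theorem add_rpow_one_sub_le_of_add_le_mul {ν γ L L₁ L₂ : ℝ} (hν : ν ≤ 1) (hγ₀ : 0 ≤ γ)
    (hγ₁ : γ ≤ 1) (hγ : (2 : ℝ) ^ γ * (1 - ν) ^ (1 - γ) ≤ 1) (hL : 0 ≤ L) (hL₁ : 0 ≤ L₁)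
    (hL₂ : 0 ≤ L₂) (hsum : L₁ + L₂ ≤ (1 - ν) * L) :
    L₁ ^ (1 - γ) + L₂ ^ (1 - γ) ≤ L ^ (1 - γ) :=
  calc L₁ ^ (1 - γ) + L₂ ^ (1 - γ) ≤ 2 ^ γ * (L₁ + L₂) ^ (1 - γ) := by
        simpa only [sub_sub_cancel] using
          Real.add_rpow_le_two_rpow_mul_rpow_add (p := 1 - γ) (by linarith) (by linarith) hL₁ hL₂
    _ ≤ 2 ^ γ * ((1 - ν) * L) ^ (1 - γ) := by gcongr
    _ = (2 ^ γ * (1 - ν) ^ (1 - γ)) * L ^ (1 - γ) := by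
        rw [Real.mul_rpow (by linarith) hL, mul_assoc]
    _ ≤ L ^ (1 - γ) := mul_le_of_le_one_left (by positivity) hγ

theorem exists_Icc_diff_ball_subset_union {s r t₀ t₁ : ℝ} (hs : s ∈ Icc t₀ t₁) (hr₀ : 0 ≤ r)
    (hr : r ≤ t₁ - t₀) :
    ∃ m₁ m₂, t₀ ≤ m₁ ∧ m₂ ≤ t₁ ∧ (m₁ - t₀) + (t₁ - m₂) ≤ t₁ - t₀ - r ∧
      Icc t₀ t₁ \ ball s r ⊆ Icc t₀ m₁ ∪ Icc m₂ t₁ := by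
  refine ⟨max t₀ (s - r), min t₁ (s + r), le_max_left _ _, min_le_left _ _, ?_, ?_⟩
  · rcases max_cases t₀ (s - r) with ⟨h₁, _⟩ | ⟨h₁, _⟩ <;>
      rcases min_cases t₁ (s + r) with ⟨h₂, _⟩ | ⟨h₂, _⟩ <;> rw [h₁, h₂] <;> linarith [hs.1, hs.2]
  · rintro t ⟨⟨ht₀, ht₁⟩, htb⟩
    rw [mem_ball, Real.dist_eq, not_lt, le_abs'] at htb
    rcases htb with h | h
    · exact Or.inl ⟨ht₀, le_max_of_le_right (by linarith)⟩
    · exact Or.inr ⟨min_le_of_right_le (by linarith), ht₁⟩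

namespace PorousOnIntervals

variable {ν α₀ α₁ γ : ℝ} {S : Set ℝ}

theorem volume_inter_Icc_le_add (hS : PorousOnIntervals ν α₀ α₁ S) (hν₀ : 0 ≤ ν) (hν₁ : ν ≤ 1)
    (hα₀ : 0 ≤ α₀) (hγ₀ : 0 ≤ γ) (hγ₁ : γ ≤ 1) (hγ : (2 : ℝ) ^ γ * (1 - ν) ^ (1 - γ) ≤ 1)
    (n : ℕ) {t₀ t₁ : ℝ} (ht : t₀ ≤ t₁) (hα₁ : t₁ - t₀ < α₁) :
    volume (S ∩ Icc t₀ t₁) ≤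
      ENNReal.ofReal (α₀ ^ γ * (t₁ - t₀) ^ (1 - γ) + (1 - ν) ^ n * (t₁ - t₀)) := by
  have hν : 0 ≤ 1 - ν := sub_nonneg.2 hν₁
  have h_length (t₀ t₁ : ℝ) : volume (S ∩ Icc t₀ t₁) ≤ ENNReal.ofReal (t₁ - t₀) :=
    (measure_mono inter_subset_right).trans Real.volume_Icc.le
  induction n generalizing t₀ t₁ with
  | zero =>
    refine (h_length t₀ t₁).trans (ENNReal.ofReal_le_ofReal ?_)
    rw [pow_zero, one_mul]
    exact le_add_of_nonneg_left (by have := sub_nonneg.2 ht; positivity)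
  | succ n ih =>
    have hL : 0 ≤ t₁ - t₀ := sub_nonneg.2 ht
    by_cases hsmall : t₁ - t₀ ≤ α₀
    · refine (h_length t₀ t₁).trans (ENNReal.ofReal_le_ofReal ?_)
      exact (Real.le_rpow_mul_rpow_one_sub hγ₀ hL hsmall).trans
        (le_add_of_nonneg_right (by positivity))
    have hdist : dist t₀ t₁ = t₁ - t₀ := by rw [Real.dist_eq, abs_sub_comm, abs_of_nonneg hL]
    obtain ⟨s, hs, hdisj⟩ := hS t₀ t₁ (by rw [hdist]; linarith) (by rwa [hdist])
    rw [segment_eq_Icc ht] at hs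
    rw [hdist] at hdisj
    obtain ⟨m₁, m₂, hm₁, hm₂, hsum, hcover⟩ := exists_Icc_diff_ball_subset_union hs
      (by positivity) (mul_le_of_le_one_left hL hν₁)
    have hsplit : S ∩ Icc t₀ t₁ ⊆ S ∩ Icc t₀ m₁ ∪ S ∩ Icc m₂ t₁ := by
      rw [← inter_union_distrib_left]
      exact fun t ⟨htS, htI⟩ => ⟨htS, hcover ⟨htI, fun hb => disjoint_left.1 hdisj hb htS⟩⟩
    have hL₁ : 0 ≤ m₁ - t₀ := sub_nonneg.2 hm₁
    have hL₂ : 0 ≤ t₁ - m₂ := sub_nonneg.2 hm₂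
    have hsum' : (m₁ - t₀) + (t₁ - m₂) ≤ (1 - ν) * (t₁ - t₀) := by linarith
    have hνL : 0 ≤ ν * (t₁ - t₀) := mul_nonneg hν₀ hL
    have hpow := add_rpow_one_sub_le_of_add_le_mul hν₁ hγ₀ hγ₁ hγ hL hL₁ hL₂ hsum'
    calc volume (S ∩ Icc t₀ t₁)
        ≤ volume (S ∩ Icc t₀ m₁) + volume (S ∩ Icc m₂ t₁) :=
          (measure_mono hsplit).trans (measure_union_le _ _)
      _ ≤ ENNReal.ofReal (α₀ ^ γ * (m₁ - t₀) ^ (1 - γ) + (1 - ν) ^ n * (m₁ - t₀)) +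
          ENNReal.ofReal (α₀ ^ γ * (t₁ - m₂) ^ (1 - γ) + (1 - ν) ^ n * (t₁ - m₂)) :=
          add_le_add (ih hm₁ (by linarith)) (ih hm₂ (by linarith))
      _ = ENNReal.ofReal (α₀ ^ γ * (m₁ - t₀) ^ (1 - γ) + (1 - ν) ^ n * (m₁ - t₀) +
          (α₀ ^ γ * (t₁ - m₂) ^ (1 - γ) + (1 - ν) ^ n * (t₁ - m₂))) :=
          (ENNReal.ofReal_add (by positivity) (by positivity)).symm
      _ ≤ _ := ENNReal.ofReal_le_ofReal (by
          linear_combination mul_le_mul_of_nonneg_left hpow (by positivity : 0 ≤ α₀ ^ γ) +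
            mul_le_mul_of_nonneg_left hsum' (by positivity : 0 ≤ (1 - ν) ^ n))

theorem volume_inter_Icc_le (hS : PorousOnIntervals ν α₀ α₁ S) (hν₀ : 0 < ν) (hν₁ : ν ≤ 1)
    (hα₀ : 0 ≤ α₀) (hγ₀ : 0 ≤ γ) (hγ₁ : γ ≤ 1) (hγ : (2 : ℝ) ^ γ * (1 - ν) ^ (1 - γ) ≤ 1)
    {t₀ t₁ : ℝ} (ht : t₀ ≤ t₁) (hα₁ : t₁ - t₀ < α₁) :
    volume (S ∩ Icc t₀ t₁) ≤ ENNReal.ofReal (α₀ ^ γ * (t₁ - t₀) ^ (1 - γ)) := by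
  have hlim : Tendsto (fun n : ℕ => (1 - ν) ^ n * (t₁ - t₀)) atTop (𝓝 0) := by
    simpa using (tendsto_pow_atTop_nhds_zero_of_lt_one (sub_nonneg.2 hν₁)
      (sub_lt_self 1 hν₀)).mul_const (t₁ - t₀)
  refine ge_of_tendsto' (x := atTop) ?_
    fun n => hS.volume_inter_Icc_le_add hν₀.le hν₁ hα₀ hγ₀ hγ₁ hγ n ht hα₁
  simpa using ENNReal.tendsto_ofReal (hlim.const_add (α₀ ^ γ * (t₁ - t₀) ^ (1 - γ)))

end PorousOnIntervals

/-- **Measure of the intersection of a line-porous set with a segment** (Lemma A.5): if `Y`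
is `ν`-porous on lines from scales `α₀` to `α₁` and `τ` is a line segment of length
`α₀ < R < α₁`, then the one-dimensional Lebesgue measure of `τ ∩ Y` (in the isometric
parametrization of the segment from `a` to `b` by arclength) is at most `C R (α₀/R)^γ`,
with `γ = ν / (C (1 + |log ν|))` and `C, γ` depending only on `ν`. -/
theorem measure_segment_inter_line_porous (ν : ℝ) (hν : ν ∈ Set.Ioo (0 : ℝ) 1) :
    ∃ C > (0 : ℝ),
      ∀ (d : ℕ) (α₀ α₁ : ℝ) (Y : Set (EuclideanSpace ℝ (Fin d))),
        0 ≤ α₀ → PorousOnLines ν α₀ α₁ Y →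
        ∀ a b : EuclideanSpace ℝ (Fin d), α₀ < dist a b → dist a b < α₁ →
          volume {t : ℝ | t ∈ Set.Icc 0 (dist a b) ∧ a + t • (‖b - a‖⁻¹ • (b - a)) ∈ Y} ≤
            ENNReal.ofReal
              (C * dist a b * (α₀ / dist a b) ^ (ν / (C * (1 + |Real.log ν|)))) := by
  obtain ⟨hν₀, hν₁⟩ := hν
  refine ⟨4, by norm_num, fun d α₀ α₁ Y hα₀ hY a b hab hab' => ?_⟩
  set R := dist a b
  set γ := ν / (4 * (1 + |Real.log ν|))
  have hR : 0 < R := hα₀.trans_lt hab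
  have hγ₀ : 0 < γ := by positivity
  have hγν : γ ≤ ν / 4 :=
    div_le_div_of_nonneg_left hν₀.le (by norm_num) (by linarith [abs_nonneg (Real.log ν)])
  have hu : ‖‖b - a‖⁻¹ • (b - a)‖ = 1 :=
    norm_smul_inv_norm (sub_ne_zero.2 (dist_pos.1 hR).symm)
  have hbound := (hY.porousOnIntervals_preimage a hu).volume_inter_Icc_le hν₀ hν₁.le hα₀ hγ₀.le
    (by linarith) (two_rpow_mul_one_sub_rpow_le_one hν₁ hγ₀.le hγν) hR.le (by rwa [sub_zero])
  have hrpow : α₀ ^ γ * R ^ (1 - γ) = R * (α₀ / R) ^ γ := by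
    rw [Real.div_rpow hα₀ hR.le, Real.rpow_sub hR, Real.rpow_one]
    field_simp
  rw [sub_zero, hrpow, inter_comm] at hbound
  refine hbound.trans (ENNReal.ofReal_le_ofReal ?_)
  rw [mul_assoc]
  exact le_mul_of_one_le_left (by positivity) (by norm_num)
end
end
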